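/- arXiv:2105.07700 — 7 statements merged into one kernel-verified Lean document; each statement's English description precedes it below -/
import Mathlib

section
/- Let n ≥ 1 and let x⁽¹⁾,…,x⁽ⁿ⁺¹⁾ be the vertices of a regular simplex inscribed into the ball B(x⁰;R) in ℝⁿ, with basic Lagrange polynomials λ₁,…,λ_{n+1}. Let m be an integer with 1 ≤ m ≤ (n+1)/2, let A ⊆ {1,…,n+1} with |A| = m, let g be the centroid of {x⁽ʲ⁾ : j ∈ A}, let h be the centroid of {x⁽ʲ⁾ : j ∉ A}, and let y be the unique point with ‖y − x⁰‖ = R of the form y = g + t(h − g) with t > 0. Then Σ_{j=1}^{n+1} |λⱼ(y)| ≥ ψ(m), where ψ(t) = (2√n/(n+1))·√(t(n+1−t)) + |1 − 2t/(n+1)|. -/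
/-!
Translate so that the circumcentre `x₀` is the origin. The vertices span the space and
`⟪xᵢ - x₀, ∑ⱼ (xⱼ - x₀)⟫` does not depend on `i`, so the circumcentre is the centroid and the
Gram matrix of the `xᵢ - x₀` is `R²` on the diagonal and `-R²/n` off it. Hence `g - x₀` and
`h - x₀` are opposite multiples of `S = ∑_{j ∈ A} (xⱼ - x₀)`, where `‖S‖² = m (n + 1 - m) R² / n`,
and `‖y - x₀‖ = R` becomes `((n + 1) t - (n + 1 - m))² = n m (n + 1 - m)`, whose positive root
satisfies `t ≥ 1`. On the other hand `λⱼ(y)` equals `(1 - t)/m` on `A` and `t/(n + 1 - m)` off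
`A`, so `∑ⱼ |λⱼ(y)| = |1 - t| + t = 2t - 1`, which is exactly `ψ(m)`.
-/

/-- ψ(t) = (2√n/(n+1))·√(t(n+1−t)) + |1 − 2t/(n+1)|. -/
noncomputable def psi (n : ℕ) (t : ℝ) : ℝ :=
  2 * Real.sqrt n / (n + 1) * Real.sqrt (t * (n + 1 - t)) + |1 - 2 * t / (n + 1)|

/-- `lam` is the family of basic Lagrange polynomials (barycentric coordinates)
of the simplex with vertices `x`. -/
def IsLagrangeBasis {n : ℕ} (x : Fin (n + 1) → EuclideanSpace ℝ (Fin n))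
    (lam : Fin (n + 1) → EuclideanSpace ℝ (Fin n) → ℝ) : Prop :=
  ∀ j, (∃ L : EuclideanSpace ℝ (Fin n) →ᵃ[ℝ] ℝ, lam j = ⇑L) ∧
    ∀ i, lam j (x i) = if i = j then 1 else 0

open Finset RealInnerProductSpace AffineMap

variable {V : Type*} [NormedAddCommGroup V] [InnerProductSpace ℝ V] {ι : Type*}

theorem eq_zero_of_inner_sub_eq_zero {x : ι → V} (hx : affineSpan ℝ (Set.range x) = ⊤) {w : V}
    (hw : ∀ i j, ⟪x i - x j, w⟫ = 0) : w = 0 := by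
  have hle : vectorSpan ℝ (Set.range x) ≤ (ℝ ∙ w)ᗮ := by
    rw [vectorSpan_def, Submodule.span_le]
    rintro _ ⟨_, ⟨i, rfl⟩, _, ⟨j, rfl⟩, rfl⟩
    rw [SetLike.mem_coe, Submodule.mem_orthogonal_singleton_iff_inner_right, real_inner_comm]
    exact hw i j
  rwa [← direction_affineSpan, hx, AffineSubspace.direction_top, top_le_iff,
    Submodule.orthogonal_eq_top_iff, Submodule.span_singleton_eq_bot] at hle

theorem Finset.centroid_sub_eq_inv_smul_sum {s : Finset ι} (hs : s.Nonempty) (x : ι → V) (x₀ : V) :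
    s.centroid ℝ x - x₀ = (#s : ℝ)⁻¹ • ∑ i ∈ s, (x i - x₀) := by
  rw [← vsub_eq_sub, s.centroid_vsub_const ℝ hs, centroid_def,
    affineCombination_eq_linear_combination _ _ _ (s.sum_centroidWeights_eq_one_of_nonempty ℝ hs)]
  simp only [centroidWeights_apply, vsub_eq_sub, smul_sum]

section Gram

variable [DecidableEq ι] {v : ι → V} {a c : ℝ}

theorem inner_sum_of_inner_eq_ite (hv : ∀ i j, ⟪v i, v j⟫ = if i = j then a else c) (i : ι)
    (s : Finset ι) : ⟪v i, ∑ j ∈ s, v j⟫ = #s * c + if i ∈ s then a - c else 0 := by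
  have hterm : ∀ j, ⟪v i, v j⟫ = c + if i = j then a - c else 0 := fun j => by
    rw [hv]; split_ifs <;> ring
  rw [inner_sum, sum_congr rfl fun j _ => hterm j, sum_add_distrib, sum_ite_eq]
  simp

theorem norm_sum_sq_of_inner_eq_ite (hv : ∀ i j, ⟪v i, v j⟫ = if i = j then a else c)
    (s : Finset ι) : ‖∑ j ∈ s, v j‖ ^ 2 = #s * (a + (#s - 1) * c) := by
  rw [← real_inner_self_eq_norm_sq, sum_inner,
    sum_congr rfl fun i hi => by rw [inner_sum_of_inner_eq_ite hv i s, if_pos hi]]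
  simp only [sum_const, nsmul_eq_mul]
  ring

end Gram

section RegularSimplex

variable [DecidableEq ι] {x : ι → V} {x₀ : V} {R d : ℝ}

theorem inner_sub_sub_eq_ite_of_dist_eq (hins : ∀ i, dist (x i) x₀ = R)
    (hreg : ∀ i j, i ≠ j → dist (x i) (x j) = d) (i j : ι) :
    ⟪x i - x₀, x j - x₀⟫ = if i = j then R ^ 2 else R ^ 2 - d ^ 2 / 2 := by
  have hnorm : ∀ k, ‖x k - x₀‖ = R := fun k => by rw [← dist_eq_norm, hins]
  split_ifs with hij
  · rw [hij, real_inner_self_eq_norm_sq, hnorm]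
  · have hdiff : ‖(x i - x₀) - (x j - x₀)‖ = d := by
      rw [sub_sub_sub_cancel_right, ← dist_eq_norm, hreg i j hij]
    have := norm_sub_sq_real (x i - x₀) (x j - x₀)
    rw [hdiff, hnorm, hnorm] at this
    linarith

theorem sum_sub_eq_zero_of_dist_eq [Fintype ι] (hx : affineSpan ℝ (Set.range x) = ⊤)
    (hins : ∀ i, dist (x i) x₀ = R) (hreg : ∀ i j, i ≠ j → dist (x i) (x j) = d) :
    ∑ i, (x i - x₀) = 0 := by
  refine eq_zero_of_inner_sub_eq_zero hx fun i j => ?_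
  rw [← sub_sub_sub_cancel_right (x i) (x j) x₀, inner_sub_left,
    inner_sum_of_inner_eq_ite (inner_sub_sub_eq_ite_of_dist_eq hins hreg),
    inner_sum_of_inner_eq_ite (inner_sub_sub_eq_ite_of_dist_eq hins hreg)]
  simp

theorem inner_sub_sub_eq_ite_neg_div_of_dist_eq [Fintype ι] {n : ℕ}
    (hcard : Fintype.card ι = n + 1) (hx : affineSpan ℝ (Set.range x) = ⊤)
    (hins : ∀ i, dist (x i) x₀ = R) (hreg : ∀ i j, i ≠ j → dist (x i) (x j) = d) (i j : ι) :
    ⟪x i - x₀, x j - x₀⟫ = if i = j then R ^ 2 else -R ^ 2 / n := by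
  rw [inner_sub_sub_eq_ite_of_dist_eq hins hreg]
  split_ifs with hij
  · rfl
  · have hn : (n : ℝ) ≠ 0 := by
      have := Fintype.one_lt_card_iff.mpr ⟨i, j, hij⟩
      norm_cast; omega
    have h0 := inner_sum_of_inner_eq_ite (inner_sub_sub_eq_ite_of_dist_eq hins hreg) i univ
    rw [sum_sub_eq_zero_of_dist_eq hx hins hreg, inner_zero_right, card_univ, hcard,
      if_pos (mem_univ i)] at h0
    push_cast at h0
    field_simp
    linarith

theorem dist_lineMap_centroid_compl_sq [Fintype ι] {n : ℕ} (hcard : Fintype.card ι = n + 1)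
    (hx : affineSpan ℝ (Set.range x) = ⊤) (hins : ∀ i, dist (x i) x₀ = R)
    (hreg : ∀ i j, i ≠ j → dist (x i) (x j) = d) {s : Finset ι} (hs : s.Nonempty)
    (hsc : sᶜ.Nonempty) (t : ℝ) :
    dist (lineMap (s.centroid ℝ x) (sᶜ.centroid ℝ x) t) x₀ ^ 2 =
      R ^ 2 * ((n + 1) * t - #sᶜ) ^ 2 / (n * #s * #sᶜ) := by
  set S := ∑ i ∈ s, (x i - x₀)
  have hcompl : ∑ i ∈ sᶜ, (x i - x₀) = -S := eq_neg_of_add_eq_zero_right <| by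
    rw [sum_add_sum_compl, sum_sub_eq_zero_of_dist_eq hx hins hreg]
  have hS : ‖S‖ ^ 2 = #s * (R ^ 2 + (#s - 1) * (-R ^ 2 / n)) :=
    norm_sum_sq_of_inner_eq_ite (inner_sub_sub_eq_ite_neg_div_of_dist_eq hcard hx hins hreg) s
  have hvec : lineMap (s.centroid ℝ x) (sᶜ.centroid ℝ x) t - x₀ = ((1 - t) / #s - t / #sᶜ) • S := by
    rw [eq_add_of_sub_eq (centroid_sub_eq_inv_smul_sum hs x x₀),
      eq_add_of_sub_eq (centroid_sub_eq_inv_smul_sum hsc x x₀), hcompl, lineMap_apply_module]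
    module
  have hn : (n : ℝ) = #s + #sᶜ - 1 := by
    have : (#s : ℝ) + #sᶜ = n + 1 := by exact_mod_cast (card_add_card_compl s).trans hcard
    linarith
  have h1 : (1 : ℝ) ≤ #s := by exact_mod_cast hs.card_pos
  have h2 : (1 : ℝ) ≤ #sᶜ := by exact_mod_cast hsc.card_pos
  rw [dist_eq_norm, hvec, norm_smul, mul_pow, Real.norm_eq_abs, sq_abs, hS, hn]
  have : (#s : ℝ) + #sᶜ - 1 ≠ 0 := by linarith
  field_simp
  ring

theorem sq_eq_of_dist_lineMap_centroid_compl_eq [Fintype ι] {n : ℕ}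
    (hcard : Fintype.card ι = n + 1) (hx : affineSpan ℝ (Set.range x) = ⊤)
    (hins : ∀ i, dist (x i) x₀ = R) (hreg : ∀ i j, i ≠ j → dist (x i) (x j) = d) (hR : R ≠ 0)
    {s : Finset ι} (hs : s.Nonempty) (hsc : sᶜ.Nonempty) {t : ℝ}
    (hdist : dist (lineMap (s.centroid ℝ x) (sᶜ.centroid ℝ x) t) x₀ = R) :
    ((n + 1) * t - #sᶜ) ^ 2 = n * #s * #sᶜ := by
  have hn : 0 < n := by
    have := (card_add_card_compl s).trans hcard
    have := hs.card_pos
    have := hsc.card_pos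
    omega
  have hD : (n * #s * #sᶜ : ℝ) ≠ 0 := by
    have := hs.card_pos
    have := hsc.card_pos
    positivity
  have := dist_lineMap_centroid_compl_sq hcard hx hins hreg hs hsc t
  rwa [hdist, eq_comm, mul_div_assoc, mul_eq_left₀ (pow_ne_zero 2 hR),
    div_eq_one_iff_eq hD] at this

end RegularSimplex

namespace IsLagrangeBasis

variable {n : ℕ} {x : Fin (n + 1) → EuclideanSpace ℝ (Fin n)}
  {lam : Fin (n + 1) → EuclideanSpace ℝ (Fin n) → ℝ}

theorem apply_centroid (hlam : IsLagrangeBasis x lam) (j : Fin (n + 1))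
    {s : Finset (Fin (n + 1))} (hs : s.Nonempty) :
    lam j (s.centroid ℝ x) = if j ∈ s then (#s : ℝ)⁻¹ else 0 := by
  obtain ⟨⟨L, hL⟩, hval⟩ := hlam j
  have hw := s.sum_centroidWeights_eq_one_of_nonempty ℝ hs
  rw [hL, centroid_def, s.map_affineCombination x _ hw L,
    affineCombination_eq_linear_combination _ _ _ hw]
  simp only [centroidWeights_apply, Function.comp_apply, ← hL, hval, smul_eq_mul, mul_ite,
    mul_one, mul_zero]
  rw [sum_ite_eq']

theorem apply_lineMap (hlam : IsLagrangeBasis x lam) (j : Fin (n + 1))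
    (p q : EuclideanSpace ℝ (Fin n)) (t : ℝ) :
    lam j (lineMap p q t) = (1 - t) * lam j p + t * lam j q := by
  obtain ⟨⟨L, hL⟩, -⟩ := hlam j
  rw [hL, L.apply_lineMap, lineMap_apply_ring]

theorem sum_abs_apply_lineMap_centroid_compl (hlam : IsLagrangeBasis x lam)
    {s : Finset (Fin (n + 1))} (hs : s.Nonempty) (hsc : sᶜ.Nonempty) {t : ℝ} (ht : 0 ≤ t) :
    ∑ j, |lam j (lineMap (s.centroid ℝ x) (sᶜ.centroid ℝ x) t)| = |1 - t| + t := by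
  have hterm : ∀ j, |lam j (lineMap (s.centroid ℝ x) (sᶜ.centroid ℝ x) t)| =
      if j ∈ s then |1 - t| / #s else t / #sᶜ := fun j => by
    by_cases hj : j ∈ s <;>
      simp [hlam.apply_lineMap, hlam.apply_centroid _ hs, hlam.apply_centroid _ hsc, hj, abs_mul,
        abs_of_nonneg ht, div_eq_mul_inv]
  rw [sum_congr rfl fun j _ => hterm j, ← sum_add_sum_compl s, sum_congr rfl fun j hj => if_pos hj,
    sum_congr rfl fun j hj => if_neg (mem_compl.mp hj)]
  simp only [sum_const, nsmul_eq_mul]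
  field_simp

end IsLagrangeBasis

theorem psi_natCast_eq {n m : ℕ} (hm : 2 * m ≤ n + 1) :
    psi n m = (n + 1 - 2 * m + 2 * √(n * m * (n + 1 - m))) / (n + 1) := by
  have hm' : (2 * m : ℝ) ≤ n + 1 := by exact_mod_cast hm
  rw [psi, abs_of_nonneg (by rw [sub_nonneg, div_le_one (by positivity)]; exact hm'),
    mul_assoc (n : ℝ), Real.sqrt_mul (Nat.cast_nonneg n)]
  field_simp
  ring

theorem abs_one_sub_add_eq_psi {n m : ℕ} (hm1 : 1 ≤ m) (hm2 : 2 * m ≤ n + 1) {t : ℝ} (ht : 0 < t)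
    (hsphere : ((n + 1) * t - (n + 1 - m)) ^ 2 = n * m * (n + 1 - m)) :
    |1 - t| + t = psi n m := by
  have hm1' : (1 : ℝ) ≤ m := by exact_mod_cast hm1
  have hm2' : (2 * m : ℝ) ≤ n + 1 := by exact_mod_cast hm2
  set r := √(n * m * (n + 1 - m)) with hr
  have hr_nonneg : 0 ≤ r := Real.sqrt_nonneg _
  have hr_sq : r ^ 2 = n * m * (n + 1 - m) := Real.sq_sqrt (by nlinarith)
  have hn1 : (1 : ℝ) ≤ n := by linarith
  have hm_le : (m : ℝ) ≤ r := (Real.le_sqrt (by linarith) (by nlinarith)).mpr <| by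
    nlinarith [mul_le_mul_of_nonneg_right hn1 (by linarith : (0 : ℝ) ≤ n + 1 - m)]
  have hm'_le : (n + 1 - m : ℝ) ≤ r := (Real.le_sqrt (by linarith) (by nlinarith)).mpr <| by
    nlinarith [mul_nonneg (by linarith : (0 : ℝ) ≤ n + 1 - m) (by linarith : (0 : ℝ) ≤ m - 1)]
  have hroot : (n + 1) * t = n + 1 - m + r := by
    rw [← hr_sq] at hsphere
    rcases eq_or_eq_neg_of_sq_eq_sq _ _ hsphere with h | h
    · linarith
    -- the other root is `(n + 1) t = n + 1 - m - r ≤ 0`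
    · nlinarith
  rw [psi_natCast_eq hm2, ← hr, abs_of_nonpos (by nlinarith), eq_div_iff (by positivity)]
  linarith

theorem lambda_at_y_ge_psi_m_general
    {n : ℕ}
    (x0 : EuclideanSpace ℝ (Fin n)) (R : ℝ) (hR : 0 < R)
    (x : Fin (n + 1) → EuclideanSpace ℝ (Fin n))
    (hind : AffineIndependent ℝ x)
    (hreg : ∃ d : ℝ, ∀ i j, i ≠ j → dist (x i) (x j) = d)
    (hins : ∀ j, dist (x j) x0 = R)
    (lam : Fin (n + 1) → EuclideanSpace ℝ (Fin n) → ℝ)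
    (hlam : IsLagrangeBasis x lam)
    (m : ℕ) (hm1 : 1 ≤ m) (hm2 : 2 * m ≤ n + 1)
    (A : Finset (Fin (n + 1))) (hA : A.card = m)
    (g h : EuclideanSpace ℝ (Fin n))
    (hg : g = Finset.centroid ℝ A x)
    (hh : h = Finset.centroid ℝ Aᶜ x)
    (y : EuclideanSpace ℝ (Fin n)) (t : ℝ) (ht : 0 < t)
    (hy : y = g + t • (h - g)) (hyR : dist y x0 = R) :
    ∑ j, |lam j y| ≥ psi n m := by
  obtain ⟨d, hreg⟩ := hreg
  have hspan : affineSpan ℝ (Set.range x) = ⊤ :=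
    hind.affineSpan_eq_top_iff_card_eq_finrank_add_one.mpr (by simp)
  have hA_ne : A.Nonempty := card_pos.mp (by omega)
  have hAc_card : #Aᶜ = n + 1 - m := by rw [card_compl, hA, Fintype.card_fin]
  have hAc_ne : Aᶜ.Nonempty := card_pos.mp (by omega)
  have hy' : y = lineMap (A.centroid ℝ x) (Aᶜ.centroid ℝ x) t := by
    rw [hy, hg, hh, lineMap_apply_module']; abel
  have hsphere := sq_eq_of_dist_lineMap_centroid_compl_eq (n := n) (by simp) hspan hins hreg
    hR.ne' hA_ne hAc_ne (hy' ▸ hyR)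
  rw [hA, hAc_card, Nat.cast_sub (by omega), Nat.cast_add, Nat.cast_one] at hsphere
  rw [hy', hlam.sum_abs_apply_lineMap_centroid_compl hA_ne hAc_ne ht.le,
    abs_one_sub_add_eq_psi hm1 hm2 ht hsphere]

theorem lambda_at_y_ge_psi_m
    {n : ℕ} (hn : 1 ≤ n)
    (x0 : EuclideanSpace ℝ (Fin n)) (R : ℝ) (hR : 0 < R)
    (x : Fin (n + 1) → EuclideanSpace ℝ (Fin n))
    (hind : AffineIndependent ℝ x)
    (hreg : ∃ d : ℝ, ∀ i j, i ≠ j → dist (x i) (x j) = d)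
    (hins : ∀ j, dist (x j) x0 = R)
    (lam : Fin (n + 1) → EuclideanSpace ℝ (Fin n) → ℝ)
    (hlam : IsLagrangeBasis x lam)
    (m : ℕ) (hm1 : 1 ≤ m) (hm2 : 2 * m ≤ n + 1)
    (A : Finset (Fin (n + 1))) (hA : A.card = m)
    (g h : EuclideanSpace ℝ (Fin n))
    (hg : g = Finset.centroid ℝ A x)
    (hh : h = Finset.centroid ℝ Aᶜ x)
    (y : EuclideanSpace ℝ (Fin n)) (t : ℝ) (ht : 0 < t)
    (hy : y = g + t • (h - g)) (hyR : dist y x0 = R) :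
    ∑ j, |lam j y| ≥ psi n m :=
  lambda_at_y_ge_psi_m_general x0 R hR x hind hreg hins lam hlam m hm1 hm2 A hA g h hg hh y t ht hy
    hyR
end

section
/- Let n ≥ 1 and let x⁽¹⁾,…,x⁽ⁿ⁺¹⁾ be the vertices of a regular simplex inscribed into the ball B(x⁰;R) in ℝⁿ. Let A ⊆ {1,…,n+1} with |A| = m (1 ≤ m ≤ n), let g be the centroid of {x⁽ʲ⁾ : j ∈ A}, let h be the centroid of {x⁽ʲ⁾ : j ∉ A}, and let y be the unique point with ‖y − x⁰‖ = R of the form y = g + t(h − g) with t > 0. Then every affine function p : ℝⁿ → ℝ satisfying p(x⁽ʲ⁾) = −1 for j ∈ A and p(x⁽ʲ⁾) = 1 for j ∉ A satisfies p(y) = (n+1−2m)/(n+1) + 2R/‖g − h‖. -/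
/-!
An equilateral simplex has its circumcenter `x⁰` at its centroid: the inner products
`⟪xᵢ - x⁰, xⱼ - x⁰⟫ = R² - ‖xᵢ - xⱼ‖² / 2` are invariant under permuting the vertices, so
`∑ₖ (xₖ - x⁰)` is orthogonal to every edge while lying in their span. Splitting the vertices into
`A` and its complement gives `x⁰ = g + (n + 1 - m) / (n + 1) • (h - g)`: the centre lies on the
line through `g` and `h`. Along that line `p` is affine with `p g = -1` and `p h = 1`, hence
`p (g + t • (h - g)) = 2 t - 1`. Since `g`, a centroid of points of the sphere, lies in the ball,
the point `y` with `t > 0` is the one beyond `x⁰` at distance `R`, i.e.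
`t = (n + 1 - m) / (n + 1) + R / ‖g - h‖`.
-/

open Finset AffineMap
open scoped RealInnerProductSpace

theorem AffineMap.apply_centroid_of_forall_eq {k V P V₂ P₂ ι : Type*} [Field k] [CharZero k]
    [AddCommGroup V] [Module k V] [AddTorsor V P] [AddCommGroup V₂] [Module k V₂]
    [AddTorsor V₂ P₂] (f : P →ᵃ[k] P₂) {s : Finset ι} (hs : s.Nonempty) {p : ι → P} {q : P₂}
    (hf : ∀ i ∈ s, f (p i) = q) : f (s.centroid k p) = q := by
  have hw := s.sum_centroidWeights_eq_one_of_nonempty k hs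
  rw [centroid_def, map_affineCombination _ _ _ hw,
    affineCombination_congr s (fun _ _ => rfl) (p₁ := f ∘ p) (p₂ := fun _ => q) hf,
    s.affineCombination_eq_weightedVSubOfPoint_vadd_of_sum_eq_one _ _ hw q]
  simp

theorem Convex.centroid_mem {R E ι : Type*} [Field R] [LinearOrder R] [IsStrictOrderedRing R]
    [AddCommGroup E] [Module R E] {S : Set E} (hS : Convex R S) {s : Finset ι}
    (hs : s.Nonempty) {p : ι → E} (hp : ∀ i ∈ s, p i ∈ S) : s.centroid R p ∈ S := by
  rw [s.centroid_eq_centerMass hs]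
  refine hS.centerMass_mem (fun i _ => ?_) ?_ hp
  · rw [centroidWeights_apply]; positivity
  · rw [s.sum_centroidWeights_eq_one_of_nonempty R hs]; exact one_pos

section Module
variable {k V ι : Type*} [Field k] [CharZero k] [AddCommGroup V] [Module k V]

theorem Finset.card_smul_centroid (s : Finset ι) (p : ι → V) :
    (#s : k) • s.centroid k p = ∑ i ∈ s, p i := by
  rcases s.eq_empty_or_nonempty with rfl | hs
  · simp
  rw [centroid_def, affineCombination_eq_linear_combination _ _ _
    (s.sum_centroidWeights_eq_one_of_nonempty k hs), smul_sum]
  refine sum_congr rfl fun i _ => ?_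
  rw [centroidWeights_apply, smul_smul, mul_inv_cancel₀ (by simpa using hs.ne_empty), one_smul]

theorem Finset.univ_centroid_eq_lineMap_centroid_compl [Fintype ι] [Nonempty ι] [DecidableEq ι]
    (s : Finset ι) (p : ι → V) :
    univ.centroid k p =
      lineMap (s.centroid k p) (sᶜ.centroid k p) ((#sᶜ : k) / Fintype.card ι) := by
  have hN : (Fintype.card ι : k) ≠ 0 := Nat.cast_ne_zero.2 Fintype.card_ne_zero
  have hcard : (#s : k) + #sᶜ = Fintype.card ι := by exact_mod_cast card_add_card_compl s
  have h₁ : (Fintype.card ι : k) * (1 - #sᶜ / Fintype.card ι) = #s := by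
    field_simp; linear_combination -hcard
  have h₂ : (Fintype.card ι : k) * (#sᶜ / Fintype.card ι) = #sᶜ := by field_simp
  apply smul_right_injective V hN
  dsimp only
  rw [← card_univ, card_smul_centroid, card_univ, lineMap_apply_module, smul_add, smul_smul,
    smul_smul, h₁, h₂, card_smul_centroid, card_smul_centroid, sum_add_sum_compl]

end Module

theorem lineMap_param_eq_of_dist_eq {V P : Type*} [NormedAddCommGroup V] [NormedSpace ℝ V]
    [MetricSpace P] [NormedAddTorsor V P] {a b : P} {c t R : ℝ} (hab : a ≠ b) (ht : 0 < t)
    (hc : dist a (lineMap a b c) ≤ R) (hR : dist (lineMap a b t) (lineMap a b c) = R) :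
    t = c + R / dist a b := by
  rw [dist_left_lineMap, Real.norm_eq_abs] at hc
  rw [dist_lineMap_lineMap, Real.dist_eq] at hR
  have hd : 0 < dist a b := dist_pos.2 hab
  have htc : 0 ≤ t - c := by
    by_contra! h
    rw [abs_of_neg h] at hR
    nlinarith [mul_le_mul_of_nonneg_right (le_abs_self c) hd.le, mul_pos ht hd]
  rw [abs_of_nonneg htc] at hR
  field_simp
  linarith

namespace Affine.Simplex

variable {V P : Type*} [NormedAddCommGroup V] [InnerProductSpace ℝ V] [MetricSpace P]
  [NormedAddTorsor V P] {n : ℕ}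

theorem inner_vsub_circumcenter_vsub_circumcenter (s : Simplex ℝ P n) (i j : Fin (n + 1)) :
    ⟪s.points i -ᵥ s.circumcenter, s.points j -ᵥ s.circumcenter⟫ =
      s.circumradius ^ 2 - dist (s.points i) (s.points j) ^ 2 / 2 := by
  rw [real_inner_eq_norm_mul_self_add_norm_mul_self_sub_norm_sub_mul_self_div_two,
    vsub_sub_vsub_cancel_right, ← dist_eq_norm_vsub, ← dist_eq_norm_vsub, ← dist_eq_norm_vsub,
    s.dist_circumcenter_eq_circumradius, s.dist_circumcenter_eq_circumradius]
  ring

theorem Equilateral.dist_points_perm {s : Simplex ℝ P n} (he : s.Equilateral)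
    (σ : Equiv.Perm (Fin (n + 1))) (i j : Fin (n + 1)) :
    dist (s.points (σ i)) (s.points (σ j)) = dist (s.points i) (s.points j) := by
  obtain rfl | hij := eq_or_ne i j
  · simp
  · exact he.dist_eq (σ.injective.ne hij) hij

theorem Equilateral.inner_vsub_circumcenter_sum_eq {s : Simplex ℝ P n} (he : s.Equilateral)
    (i j : Fin (n + 1)) :
    ⟪s.points i -ᵥ s.circumcenter, ∑ k, (s.points k -ᵥ s.circumcenter)⟫ =
      ⟪s.points j -ᵥ s.circumcenter, ∑ k, (s.points k -ᵥ s.circumcenter)⟫ := by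
  have hswap : ∀ k, dist (s.points i) (s.points (Equiv.swap j i k)) =
      dist (s.points j) (s.points k) := fun k => by
    rw [← he.dist_points_perm (Equiv.swap j i) j k, Equiv.swap_apply_left]
  simp_rw [inner_sum, inner_vsub_circumcenter_vsub_circumcenter]
  rw [← Equiv.sum_comp (Equiv.swap j i)]
  simp_rw [hswap]

theorem Equilateral.circumcenter_eq_centroid {s : Simplex ℝ P n} (he : s.Equilateral) :
    s.circumcenter = s.centroid := by
  rw [eq_centroid_iff_sum_vsub_eq_zero]
  set v := ∑ k, (s.points k -ᵥ s.circumcenter)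
  have hv_mem : v ∈ vectorSpan ℝ (Set.range s.points) := by
    rw [← direction_affineSpan]
    exact Submodule.sum_mem _ fun k _ => AffineSubspace.vsub_mem_direction
      (mem_affineSpan ℝ (Set.mem_range_self k)) s.circumcenter_mem_affineSpan
  have hv_orth : vectorSpan ℝ (Set.range s.points) ≤ (ℝ ∙ v)ᗮ := by
    rw [vectorSpan_range_eq_span_range_vsub_right ℝ s.points 0, Submodule.span_le]
    rintro _ ⟨i, rfl⟩
    rw [SetLike.mem_coe, Submodule.mem_orthogonal_singleton_iff_inner_left]
    dsimp only
    rw [← vsub_sub_vsub_cancel_right _ _ s.circumcenter, inner_sub_left,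
      he.inner_vsub_circumcenter_sum_eq i 0, sub_self]
  exact inner_self_eq_zero.mp
    ((Submodule.mem_orthogonal_singleton_iff_inner_right).mp (hv_orth hv_mem))

end Affine.Simplex

theorem value_of_affine_pm_one_function_at_y_general
    {n : ℕ}
    (x0 : EuclideanSpace ℝ (Fin n)) (R : ℝ)
    (x : Fin (n + 1) → EuclideanSpace ℝ (Fin n))
    (hind : AffineIndependent ℝ x)
    (hreg : ∃ d : ℝ, ∀ i j, i ≠ j → dist (x i) (x j) = d)
    (hins : ∀ j, dist (x j) x0 = R)
    (m : ℕ) (hm1 : 1 ≤ m) (hm2 : m ≤ n)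
    (A : Finset (Fin (n + 1))) (hA : A.card = m)
    (g h : EuclideanSpace ℝ (Fin n))
    (hg : g = Finset.centroid ℝ A x)
    (hh : h = Finset.centroid ℝ Aᶜ x)
    (y : EuclideanSpace ℝ (Fin n)) (t : ℝ) (ht : 0 < t)
    (hy : y = g + t • (h - g)) (hyR : dist y x0 = R)
    (p : EuclideanSpace ℝ (Fin n) →ᵃ[ℝ] ℝ)
    (hpA : ∀ j ∈ A, p (x j) = -1)
    (hpAc : ∀ j ∉ A, p (x j) = 1) :
    p y = ((n : ℝ) + 1 - 2 * m) / ((n : ℝ) + 1) + 2 * R / ‖g - h‖ := by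
  let s : Affine.Simplex ℝ (EuclideanSpace ℝ (Fin n)) n := ⟨x, hind⟩
  have hcard_compl : (#Aᶜ : ℝ) = n + 1 - m := by
    rw [card_compl, hA, Fintype.card_fin, Nat.cast_sub (by omega)]; push_cast; ring
  have hpg : p g = -1 :=
    hg ▸ p.apply_centroid_of_forall_eq (card_pos.1 (by omega)) hpA
  have hph : p h = 1 :=
    hh ▸ p.apply_centroid_of_forall_eq (card_pos.1 (by rw [card_compl, Fintype.card_fin]; omega))
      fun j hj => hpAc j (mem_compl.1 hj)
  have hgh : g ≠ h := fun e => by norm_num [e, hph] at hpg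
  have hx0 : x0 = lineMap g h ((n + 1 - m : ℝ) / (n + 1)) := by
    have hspan : affineSpan ℝ (Set.range s.points) = ⊤ :=
      hind.affineSpan_eq_top_iff_card_eq_finrank_add_one.2 (by simp)
    calc x0 = s.circumcenter := s.eq_circumcenter_of_dist_eq (by simp [hspan]) hins
      _ = s.centroid := Affine.Simplex.Equilateral.circumcenter_eq_centroid hreg
      _ = _ := by
        rw [Affine.Simplex.centroid, univ_centroid_eq_lineMap_centroid_compl A, hcard_compl]
        simp [s, hg, hh]
  have hgx0 : dist g x0 ≤ R :=
    hg ▸ (convex_closedBall x0 R).centroid_mem (card_pos.1 (by omega))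
      (fun j _ => (hins j).le)
  have hy' : y = lineMap g h t := by rw [hy, lineMap_apply_module', add_comm]
  have ht_eq := lineMap_param_eq_of_dist_eq hgh ht (hx0 ▸ hgx0) (hy' ▸ hx0 ▸ hyR)
  have hd : dist g h ≠ 0 := dist_ne_zero.2 hgh
  rw [hy', p.apply_lineMap, hpg, hph, ht_eq, ← dist_eq_norm, lineMap_apply_module,
    smul_eq_mul, smul_eq_mul]
  field_simp
  ring

theorem value_of_affine_pm_one_function_at_y
    {n : ℕ} (hn : 1 ≤ n)
    (x0 : EuclideanSpace ℝ (Fin n)) (R : ℝ) (hR : 0 < R)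
    (x : Fin (n + 1) → EuclideanSpace ℝ (Fin n))
    (hind : AffineIndependent ℝ x)
    (hreg : ∃ d : ℝ, ∀ i j, i ≠ j → dist (x i) (x j) = d)
    (hins : ∀ j, dist (x j) x0 = R)
    (m : ℕ) (hm1 : 1 ≤ m) (hm2 : m ≤ n)
    (A : Finset (Fin (n + 1))) (hA : A.card = m)
    (g h : EuclideanSpace ℝ (Fin n))
    (hg : g = Finset.centroid ℝ A x)
    (hh : h = Finset.centroid ℝ Aᶜ x)
    (y : EuclideanSpace ℝ (Fin n)) (t : ℝ) (ht : 0 < t)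
    (hy : y = g + t • (h - g)) (hyR : dist y x0 = R)
    (p : EuclideanSpace ℝ (Fin n) →ᵃ[ℝ] ℝ)
    (hpA : ∀ j ∈ A, p (x j) = -1)
    (hpAc : ∀ j ∉ A, p (x j) = 1) :
    p y = ((n : ℝ) + 1 - 2 * m) / ((n : ℝ) + 1) + 2 * R / ‖g - h‖ :=
  value_of_affine_pm_one_function_at_y_general x0 R x hind hreg hins m hm1 hm2 A hA g h hg hh y t ht
    hy hyR p hpA hpAc
end

section
/- Let n ≥ 1 and let x⁽¹⁾,…,x⁽ⁿ⁺¹⁾ be the vertices of a regular simplex inscribed into the ball B(x⁰;R) in ℝⁿ. Let A ⊆ {1,…,n+1} with |A| = m (1 ≤ m ≤ n), let g be the centroid of {x⁽ʲ⁾ : j ∈ A} and h the centroid of {x⁽ʲ⁾ : j ∉ A}. Then ‖g − h‖² = R²(n+1)²/(n·m·(n+1−m)). -/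
open Finset RealInnerProductSpace

private lemma centroid_sub_point {n : ℕ} (x0 : EuclideanSpace ℝ (Fin n))
    (x : Fin (n+1) → EuclideanSpace ℝ (Fin n))
    (B : Finset (Fin (n+1))) (hB : B.Nonempty) :
    Finset.centroid ℝ B x - x0 = (B.card : ℝ)⁻¹ • ∑ j ∈ B, (x j - x0) := by
  rw [Finset.centroid_def,
    B.affineCombination_eq_weightedVSubOfPoint_vadd_of_sum_eq_one _ _
      (B.sum_centroidWeights_eq_one_of_nonempty ℝ hB) x0,
    Finset.weightedVSubOfPoint_apply, Finset.smul_sum]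
  simp [Finset.centroidWeights_apply]

theorem dist_sq_centroids_of_complementary_faces
    {n : ℕ} (hn : 1 ≤ n)
    (x0 : EuclideanSpace ℝ (Fin n)) (R : ℝ) (hR : 0 < R)
    (x : Fin (n + 1) → EuclideanSpace ℝ (Fin n))
    (hind : AffineIndependent ℝ x)
    (hreg : ∃ d : ℝ, ∀ i j, i ≠ j → dist (x i) (x j) = d)
    (hins : ∀ j, dist (x j) x0 = R)
    (m : ℕ) (hm1 : 1 ≤ m) (hm2 : m ≤ n)
    (A : Finset (Fin (n + 1))) (hA : A.card = m)
    (g h : EuclideanSpace ℝ (Fin n))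
    (hg : g = Finset.centroid ℝ A x)
    (hh : h = Finset.centroid ℝ Aᶜ x) :
    ‖g - h‖ ^ 2 = R ^ 2 * ((n : ℝ) + 1) ^ 2 /
      ((n : ℝ) * m * ((n : ℝ) + 1 - m)) := by
  obtain ⟨d, hd⟩ := hreg
  set v : Fin (n+1) → EuclideanSpace ℝ (Fin n) := fun i => x i - x0 with hv
  set t : ℝ := R ^ 2 - d ^ 2 / 2 with htdef
  have hvnorm : ∀ i, ‖v i‖ ^ 2 = R ^ 2 := by
    intro i
    rw [hv]
    simp only
    rw [← dist_eq_norm, hins i]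
  have hip : ∀ i j, i ≠ j → ⟪v i, v j⟫ = t := by
    intro i j hij
    have h1 : ‖v i - v j‖ ^ 2 = d ^ 2 := by
      have : v i - v j = x i - x j := by
        show (x i - x0) - (x j - x0) = x i - x j
        abel
      rw [this, ← dist_eq_norm, hd i j hij]
    rw [norm_sub_sq_real, hvnorm i, hvnorm j] at h1
    rw [htdef]; linarith
  set s : EuclideanSpace ℝ (Fin n) := ∑ i, v i with hs
  have hsv : ∀ j, ⟪s, v j⟫ = R ^ 2 + n * t := by
    intro j
    rw [hs, sum_inner]
    rw [← Finset.add_sum_erase _ _ (Finset.mem_univ j)]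
    rw [real_inner_self_eq_norm_sq, hvnorm j]
    have : ∑ i ∈ Finset.univ.erase j, ⟪v i, v j⟫
        = ∑ i ∈ Finset.univ.erase j, t := by
      apply Finset.sum_congr rfl
      intro i hi
      exact hip i j (Finset.mem_erase.mp hi).1
    rw [this, Finset.sum_const, Finset.card_erase_of_mem (Finset.mem_univ j)]
    simp [nsmul_eq_mul]
  -- the span of differences is everything
  have htop : vectorSpan ℝ (Set.range x) = ⊤ := by
    have h1 : affineSpan ℝ (Set.range x) = ⊤ := by
      rw [hind.affineSpan_eq_top_iff_card_eq_finrank_add_one]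
      simp [finrank_euclideanSpace_fin]
    rw [← direction_affineSpan, h1, AffineSubspace.direction_top]
  have hs0 : s = 0 := by
    have hle : vectorSpan ℝ (Set.range x) ≤ (ℝ ∙ s)ᗮ := by
      rw [vectorSpan_def]
      apply Submodule.span_le.mpr
      rintro u ⟨a, ⟨i, rfl⟩, b, ⟨j, rfl⟩, rfl⟩
      rw [SetLike.mem_coe, Submodule.mem_orthogonal_singleton_iff_inner_right]
      have hxy : x i -ᵥ x j = v i - v j := by
        show x i - x j = (x i - x0) - (x j - x0)
        abel
      show ⟪s, x i -ᵥ x j⟫ = 0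
      rw [hxy, inner_sub_right, hsv i, hsv j]
      ring
    rw [htop, top_le_iff] at hle
    have : s ∈ (ℝ ∙ s)ᗮ := by rw [hle]; trivial
    have h0 : ⟪s, s⟫ = 0 :=
      Submodule.mem_orthogonal_singleton_iff_inner_right.mp this
    exact inner_self_eq_zero.mp h0
  have hnt : (n : ℝ) * t = -R ^ 2 := by
    have := hsv 0
    rw [hs0] at this
    simp only [inner_zero_left] at this
    linarith
  have hn0 : (0 : ℝ) < n := by exact_mod_cast hn
  -- cardinalities
  have hAne : A.Nonempty := Finset.card_pos.mp (by omega)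
  have hAc : Aᶜ.card = n + 1 - m := by
    rw [Finset.card_compl, hA, Fintype.card_fin]
  have hAcne : Aᶜ.Nonempty := Finset.card_pos.mp (by omega)
  set w : EuclideanSpace ℝ (Fin n) := ∑ j ∈ A, v j with hw
  have hwc : ∑ j ∈ Aᶜ, v j = -w := by
    have h2 := Finset.sum_add_sum_compl A v
    rw [← hs, hs0] at h2
    exact eq_neg_of_add_eq_zero_right h2
  have hgx : g - x0 = (m : ℝ)⁻¹ • w := by
    rw [hg, centroid_sub_point x0 x A hAne, hA]
  have hk : ((n + 1 - m : ℕ) : ℝ) = (n : ℝ) + 1 - m := by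
    rw [Nat.cast_sub (by omega)]
    push_cast
    ring
  have hhx : h - x0 = -((((n : ℝ) + 1 - m))⁻¹ • w) := by
    rw [hh, centroid_sub_point x0 x Aᶜ hAcne, hAc, hk]
    rw [show ∑ j ∈ Aᶜ, (x j - x0) = ∑ j ∈ Aᶜ, v j from rfl, hwc]
    rw [smul_neg]
  have hgh : g - h = ((m : ℝ)⁻¹ + ((n : ℝ) + 1 - m)⁻¹) • w := by
    have h4 : g - h = (g - x0) - (h - x0) := by abel
    rw [h4, hgx, hhx, sub_neg_eq_add, ← add_smul]
  have hwnorm : ‖w‖ ^ 2 = m * (R ^ 2 + ((m : ℝ) - 1) * t) := by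
    rw [← real_inner_self_eq_norm_sq, hw, sum_inner]
    have h5 : ∀ i ∈ A, ⟪v i, ∑ j ∈ A, v j⟫ = R ^ 2 + ((m : ℝ) - 1) * t := by
      intro i hi
      rw [inner_sum, ← Finset.add_sum_erase _ _ hi, real_inner_self_eq_norm_sq,
        hvnorm i]
      have h3 : ∑ j ∈ A.erase i, ⟪v i, v j⟫ = ∑ j ∈ A.erase i, t :=
        Finset.sum_congr rfl fun j hj => hip i j (Finset.mem_erase.mp hj).1.symm
      rw [h3, Finset.sum_const, Finset.card_erase_of_mem hi, hA, nsmul_eq_mul]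
      have h6 : ((m - 1 : ℕ) : ℝ) = (m : ℝ) - 1 := by
        rw [Nat.cast_sub hm1]; push_cast; ring
      rw [h6]
    rw [Finset.sum_congr rfl h5, Finset.sum_const, hA, nsmul_eq_mul]
  have hfin : ‖g - h‖ ^ 2 = ((m : ℝ)⁻¹ + ((n : ℝ) + 1 - m)⁻¹) ^ 2 * ‖w‖ ^ 2 := by
    rw [hgh, norm_smul, Real.norm_eq_abs, mul_pow, sq_abs]
  have hm0 : (0 : ℝ) < m := by exact_mod_cast hm1
  have hk0 : (0 : ℝ) < (n : ℝ) + 1 - m := by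
    have : (m : ℝ) ≤ n := by exact_mod_cast hm2
    linarith
  have htval : t = -R ^ 2 / n := by
    field_simp
    linarith
  rw [hfin, hwnorm, htval]
  field_simp
  ring
end

section
/- Let x⁽¹⁾,…,x⁽ⁿ⁺¹⁾ be affinely independent points in ℝⁿ and S their convex hull. Let A ⊆ {1,…,n+1} with |A| = m (1 ≤ m ≤ n), let g be the centroid of {x⁽ʲ⁾ : j ∈ A} and h the centroid of {x⁽ʲ⁾ : j ∉ A}. Then the segment [g,h] is a segment of maximal length in S parallel to the vector h − g: for all points u, v ∈ S with v − u = s·(h − g) for some s ∈ ℝ, one has ‖v − u‖ ≤ ‖h − g‖. -/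
theorem segment_gh_maximal_in_its_direction
    {n : ℕ}
    (x : Fin (n + 1) → EuclideanSpace ℝ (Fin n))
    (hind : AffineIndependent ℝ x)
    (m : ℕ) (hm1 : 1 ≤ m) (hm2 : m ≤ n)
    (A : Finset (Fin (n + 1))) (hA : A.card = m)
    (g h : EuclideanSpace ℝ (Fin n))
    (hg : g = Finset.centroid ℝ A x)
    (hh : h = Finset.centroid ℝ Aᶜ x) :
    ∀ u ∈ convexHull ℝ (Set.range x), ∀ v ∈ convexHull ℝ (Set.range x),
      (∃ s : ℝ, v - u = s • (h - g)) → ‖v - u‖ ≤ ‖h - g‖ := by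
  intro u hu v hv hsv
  obtain ⟨s, hs⟩ := hsv
  rw [convexHull_range_eq_exists_affineCombination] at hu hv
  obtain ⟨su, wu, hwu0, hwu1, hwu⟩ := hu
  obtain ⟨sv, wv, hwv0, hwv1, hwv⟩ := hv
  set a : Fin (n + 1) → ℝ := Set.indicator ↑su wu with ha_def
  set b : Fin (n + 1) → ℝ := Set.indicator ↑sv wv with hb_def
  have ha1 : ∑ i, a i = 1 := by
    rw [ha_def, Finset.sum_indicator_subset _ (Finset.subset_univ su)]
    exact hwu1
  have hb1 : ∑ i, b i = 1 := by
    rw [hb_def, Finset.sum_indicator_subset _ (Finset.subset_univ sv)]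
    exact hwv1
  have ha0 : ∀ i, 0 ≤ a i := by
    intro i
    rw [ha_def]
    by_cases hi : i ∈ su
    · rw [Set.indicator_of_mem (by exact_mod_cast hi)]; exact hwu0 i hi
    · rw [Set.indicator_of_notMem (by exact_mod_cast hi)]
  have hb0 : ∀ i, 0 ≤ b i := by
    intro i
    rw [hb_def]
    by_cases hi : i ∈ sv
    · rw [Set.indicator_of_mem (by exact_mod_cast hi)]; exact hwv0 i hi
    · rw [Set.indicator_of_notMem (by exact_mod_cast hi)]
  have hu' : u = Finset.univ.affineCombination ℝ x a := by
    rw [← hwu, ha_def, ← Finset.affineCombination_indicator_subset _ _ (Finset.subset_univ su)]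
  have hv' : v = Finset.univ.affineCombination ℝ x b := by
    rw [← hwv, hb_def, ← Finset.affineCombination_indicator_subset _ _ (Finset.subset_univ sv)]
  set cg : Fin (n + 1) → ℝ := A.centroidWeightsIndicator ℝ with hcg_def
  set ch : Fin (n + 1) → ℝ := Aᶜ.centroidWeightsIndicator ℝ with hch_def
  have hg' : g = Finset.univ.affineCombination ℝ x cg := by
    rw [hg, Finset.centroid_eq_affineCombination_fintype]
  have hh' : h = Finset.univ.affineCombination ℝ x ch := by
    rw [hh, Finset.centroid_eq_affineCombination_fintype]
  have hAne : A.Nonempty := Finset.card_pos.mp (by omega)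
  have hAcne : Aᶜ.Nonempty := by
    rw [← Finset.card_pos, Finset.card_compl, Fintype.card_fin, hA]; omega
  have hcg1 : ∑ i, cg i = 1 :=
    A.sum_centroidWeightsIndicator_eq_one_of_nonempty ℝ hAne
  have hch1 : ∑ i, ch i = 1 :=
    Aᶜ.sum_centroidWeightsIndicator_eq_one_of_nonempty ℝ hAcne
  -- weights vanish by affine independence
  set d : Fin (n + 1) → ℝ := fun i => b i - a i - s * (ch i - cg i) with hd_def
  have hdsum : ∑ i, d i = 0 := by
    simp only [hd_def, Finset.sum_sub_distrib, ← Finset.mul_sum, Finset.sum_sub_distrib,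
      ha1, hb1, hcg1, hch1]
    ring
  have hvsub : Finset.univ.weightedVSub x d = (0 : EuclideanSpace ℝ (Fin n)) := by
    have h1 : v -ᵥ u = Finset.univ.weightedVSub x (b - a) := by
      rw [hu', hv', Finset.affineCombination_vsub]
    have h2 : h -ᵥ g = Finset.univ.weightedVSub x (ch - cg) := by
      rw [hg', hh', Finset.affineCombination_vsub]
    have h3 : Finset.univ.weightedVSub x d
        = Finset.univ.weightedVSub x (b - a) - s • Finset.univ.weightedVSub x (ch - cg) := by
      rw [← LinearMap.map_smul, ← LinearMap.map_sub]
      congr 1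
    rw [h3, ← h1, ← h2]
    have : v -ᵥ u = v - u := rfl
    rw [this, hs]
    have : h -ᵥ g = h - g := rfl
    rw [this, sub_self]
  have hd0 : ∀ i, d i = 0 := by
    intro i
    exact hind Finset.univ d hdsum hvsub i (Finset.mem_univ i)
  -- hence for i ∈ A : b i - a i = -s/m
  have hkey : ∀ i ∈ A, b i - a i = -(s * (↑m)⁻¹) := by
    intro i hi
    have := hd0 i
    have hcgi : cg i = (↑m)⁻¹ := by
      rw [hcg_def, Finset.centroidWeightsIndicator,
        Set.indicator_of_mem (by exact_mod_cast hi), Finset.centroidWeights_apply, hA]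
    have hchi : ch i = 0 := by
      rw [hch_def, Finset.centroidWeightsIndicator, Set.indicator_of_notMem]
      simpa using hi
    rw [hd_def] at this
    simp only [hcgi, hchi] at this
    linarith [this]
  have hm0 : (0:ℝ) < m := by exact_mod_cast hm1
  have hsumA : ∑ i ∈ A, (b i - a i) = -s := by
    rw [Finset.sum_congr rfl hkey, Finset.sum_const, hA, nsmul_eq_mul]
    field_simp
  -- |s| ≤ 1
  have hsubset_bound : ∀ (c : Fin (n+1) → ℝ), (∀ i, 0 ≤ c i) → ∑ i, c i = 1 →
      ∑ i ∈ A, c i ≤ 1 ∧ 0 ≤ ∑ i ∈ A, c i := by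
    intro c hc0 hc1
    constructor
    · rw [← hc1]
      exact Finset.sum_le_sum_of_subset_of_nonneg (Finset.subset_univ A)
        (fun i _ _ => hc0 i)
    · exact Finset.sum_nonneg fun i _ => hc0 i
  obtain ⟨hbu, hbl⟩ := hsubset_bound b hb0 hb1
  obtain ⟨hau, hal⟩ := hsubset_bound a ha0 ha1
  have hsle : |s| ≤ 1 := by
    rw [Finset.sum_sub_distrib] at hsumA
    rw [abs_le]
    constructor <;> linarith
  rw [hs, norm_smul, Real.norm_eq_abs]
  nlinarith [norm_nonneg (h - g), abs_nonneg s]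
end

section
/- Let n ≥ 1, let S be a nondegenerate simplex in ℝⁿ with vertices x⁽¹⁾,…,x⁽ⁿ⁺¹⁾ and basic Lagrange polynomials λ₁,…,λ_{n+1}, and let E be a minimal ellipsoid of S, i.e., an ellipsoid containing S whose volume does not exceed the volume of any ellipsoid containing S. Let s⁽¹⁾,…,s⁽ⁿ⁺¹⁾ be the vertices of a regular simplex inscribed into the closed unit ball B_n, with basic Lagrange polynomials λ′₁,…,λ′_{n+1}. Then max_{x∈E} Σ_{j=1}^{n+1} |λⱼ(x)| = max_{x∈B_n} Σ_{j=1}^{n+1} |λ′ⱼ(x)|. -/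
/-- An ellipsoid in ℝⁿ: the image of the closed unit ball under an invertible
affine map. -/
def IsEllipsoid {n : ℕ} (E : Set (EuclideanSpace ℝ (Fin n))) : Prop :=
  ∃ F : EuclideanSpace ℝ (Fin n) ≃ᵃ[ℝ] EuclideanSpace ℝ (Fin n),
    E = F '' Metric.closedBall 0 1

/-- `E` is a minimal (volume) ellipsoid containing the set `S`. -/
def IsMinimalEllipsoid {n : ℕ} (S E : Set (EuclideanSpace ℝ (Fin n))) : Prop :=
  IsEllipsoid E ∧ S ⊆ E ∧
    ∀ E', IsEllipsoid E' → S ⊆ E' →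
      MeasureTheory.volume E ≤ MeasureTheory.volume E'

/-!
Write `E = F '' B` and `y = F⁻¹ ∘ x`, a simplex in the unit ball `B`. The determinant of the matrix
with rows `(y i, 1)` is `n!` times the signed volume of the simplex, and it picks up the factor
`det G.linear` under an affine map `G`. Let `G` be the affine map with `G ∘ s = y`. Since `F ∘ G`
maps `B` onto an ellipsoid containing the simplex, minimality of `E` forces `|det G.linear| ≥ 1`,
so `y` has at least the volume of `s`.

Simplices of maximal volume in `B` are regular and inscribed: along row `k` the determinant is an
affine function `⟪a, ·⟫ + b` vanishing at the other vertices, and `y k` maximizes its absolute value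
on `B`, so `y k` is a unit normal of the opposite facet; hence all inner products `⟪y i, y j⟫`,
`i ≠ j`, coincide, and `n + 1` unit vectors in `ℝⁿ` with a common inner product `c ≠ 1` have
`c = -1/n`. All regular inscribed simplices have the same Gram matrix, hence the same volume, so `s`
is a maximizer, and then so is `y`. Then `G` is a linear isometry, `λⱼ ∘ F ∘ G = λ'ⱼ`, and both
suprema are taken over the same set of values.
-/

open Set Metric Matrix Finset MeasureTheory

theorem AffineBasis.exists_affineEquiv_comp_eq {ι k V P : Type*} [Ring k] [AddCommGroup V]
    [Module k V] [AddTorsor V P] (b₁ b₂ : AffineBasis ι k P) :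
    ∃ G : P ≃ᵃ[k] P, ⇑G ∘ b₁ = b₂ := by
  obtain ⟨i⟩ := b₁.nonempty
  let L := (b₁.basisOf i).equiv (b₂.basisOf i) (Equiv.refl _)
  refine ⟨(AffineEquiv.vaddConst k (b₁ i)).symm.trans
    (L.toAffineEquiv.trans (AffineEquiv.vaddConst k (b₂ i))), funext fun j => ?_⟩
  by_cases hj : j = i
  · subst hj
    simp
  · have hL := (b₁.basisOf i).equiv_apply ⟨j, hj⟩ (b₂.basisOf i) (Equiv.refl _)
    simp only [AffineBasis.basisOf_apply, Equiv.refl_apply] at hL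
    simp [L, hL]

theorem MeasureTheory.Measure.addHaar_image_affineMap {E : Type*} [NormedAddCommGroup E]
    [NormedSpace ℝ E] [MeasurableSpace E] [BorelSpace E] [FiniteDimensional ℝ E]
    (μ : Measure E) [μ.IsAddHaarMeasure] (f : E →ᵃ[ℝ] E) (s : Set E) :
    μ (f '' s) = ENNReal.ofReal |LinearMap.det f.linear| * μ s := by
  rw [f.decomp, show ⇑f.linear + (fun _ => f 0) = (· + f 0) ∘ f.linear from rfl, image_comp,
    Set.image_add_right, measure_preimage_add_right, addHaar_image_linearMap]

theorem AffineEquiv.image_closedBall_zero {E : Type*} [NormedAddCommGroup E] [NormedSpace ℝ E]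
    (G : E ≃ᵃ[ℝ] E) (hG : ∀ z, ‖G z‖ = ‖z‖) (r : ℝ) : G '' closedBall 0 r = closedBall 0 r := by
  ext z
  rw [← G.apply_symm_apply z, G.injective.mem_set_image]
  simp only [mem_closedBall_zero_iff, hG]

theorem inner_map_map_of_span_eq_top {E ι : Type*} [NormedAddCommGroup E] [InnerProductSpace ℝ E]
    {v : ι → E} (hv : Submodule.span ℝ (range v) = ⊤) {L : E →ₗ[ℝ] E}
    (hL : ∀ i j, inner ℝ (L (v i)) (L (v j)) = inner ℝ (v i) (v j)) (x y : E) :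
    inner ℝ (L x) (L y) = inner ℝ x y := by
  have h : (innerₛₗ ℝ (E := E)).compl₁₂ L L = innerₛₗ ℝ :=
    LinearMap.ext_on_range hv fun i => LinearMap.ext_on_range hv fun j => hL i j
  exact LinearMap.congr_fun₂ h x y

theorem norm_eq_one_and_exists_smul_of_isMaxOn {E : Type*} [NormedAddCommGroup E]
    [InnerProductSpace ℝ E] {a v : E} {b : ℝ} (ha : a ≠ 0) (hv : v ∈ closedBall (0 : E) 1)
    (hmax : IsMaxOn (fun w => |inner ℝ a w + b|) (closedBall 0 1) v) :
    ‖v‖ = 1 ∧ ∃ r : ℝ, r ≠ 0 ∧ a = r • v := by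
  rw [mem_closedBall_zero_iff] at hv
  have ha' : 0 < ‖a‖ := norm_pos_iff.mpr ha
  have hpeak : ‖a‖ + |b| ≤ |inner ℝ a v + b| := by
    obtain ⟨ε, hε, hεb⟩ : ∃ ε : ℝ, |ε| = 1 ∧ |ε * ‖a‖ + b| = ‖a‖ + |b| := by
      rcases le_total 0 b with hb | hb
      · exact ⟨1, abs_one, by rw [one_mul, abs_of_nonneg (by positivity), abs_of_nonneg hb]⟩
      · refine ⟨-1, by simp, ?_⟩
        rw [abs_of_nonpos (by linarith), abs_of_nonpos hb]
        ring
    have hw : (ε / ‖a‖) • a ∈ closedBall (0 : E) 1 := by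
      rw [mem_closedBall_zero_iff, norm_smul, Real.norm_eq_abs, abs_div, hε, abs_norm,
        div_mul_cancel₀ 1 ha'.ne']
    have hinner : inner ℝ a ((ε / ‖a‖) • a) = ε * ‖a‖ := by
      rw [real_inner_smul_right, real_inner_self_eq_norm_sq]
      field_simp
    simpa [hinner, hεb] using isMaxOn_iff.mp hmax _ hw
  have hCS : |inner ℝ a v| ≤ ‖a‖ * ‖v‖ := abs_real_inner_le_norm a v
  have htri : |inner ℝ a v + b| ≤ |inner ℝ a v| + |b| := abs_add_le _ _
  have hv1 : ‖v‖ = 1 := by nlinarith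
  have hv0 : v ≠ 0 := norm_ne_zero_iff.mp (by rw [hv1]; exact one_ne_zero)
  refine ⟨hv1, (norm_inner_eq_norm_iff hv0 ha).mp ?_⟩
  rw [hv1, mul_one] at hCS
  rw [Real.norm_eq_abs, real_inner_comm, hv1, one_mul]
  linarith

section InnerEqConst

variable {E ι : Type*} [NormedAddCommGroup E] [InnerProductSpace ℝ E] [Fintype ι]
  {v : ι → E} {c : ℝ}

theorem inner_sum_smul_of_inner_eq_const (hv : ∀ i, ‖v i‖ = 1)
    (hc : ∀ i j, i ≠ j → inner ℝ (v i) (v j) = c) (g : ι → ℝ) (j : ι) :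
    inner ℝ (v j) (∑ i, g i • v i) = c * ∑ i, g i + (1 - c) * g j := by
  classical
  have hterm : ∀ i,
      inner ℝ (v j) (g i • v i) = c * g i + (1 - c) * if j = i then g i else 0 := fun i => by
    rw [real_inner_smul_right]
    rcases eq_or_ne j i with rfl | h
    · rw [real_inner_self_eq_norm_sq, hv, if_pos rfl]
      ring
    · rw [hc j i h, if_neg h]
      ring
  simp only [inner_sum, hterm, sum_add_distrib, ← mul_sum, sum_ite_eq, Finset.mem_univ, ite_true]

theorem sum_eq_zero_of_inner_eq_const [FiniteDimensional ℝ E]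
    (hcard : Module.finrank ℝ E < Fintype.card ι) (hv : ∀ i, ‖v i‖ = 1)
    (hc : ∀ i j, i ≠ j → inner ℝ (v i) (v j) = c) (hc1 : c ≠ 1) : ∑ i, v i = 0 := by
  obtain ⟨g, hg, i₀, hi₀⟩ := Fintype.not_linearIndependent_iff.mp
    fun h => hcard.not_ge h.fintype_card_le_finrank
  have hg_const : ∀ j, g j = g i₀ := fun j => by
    have h₁ := inner_sum_smul_of_inner_eq_const hv hc g j
    have h₂ := inner_sum_smul_of_inner_eq_const hv hc g i₀
    rw [hg, inner_zero_right] at h₁ h₂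
    exact mul_left_cancel₀ (sub_ne_zero.mpr hc1.symm) (by linarith)
  have hsmul : g i₀ • ∑ i, v i = 0 := by
    rw [smul_sum, ← hg]
    exact sum_congr rfl fun j _ => by rw [hg_const j]
  exact (smul_eq_zero.mp hsmul).resolve_left hi₀

theorem mul_card_sub_one_eq_neg_one_of_sum_eq_zero (hsum : ∑ i, v i = 0) (hv : ∀ i, ‖v i‖ = 1)
    (hc : ∀ i j, i ≠ j → inner ℝ (v i) (v j) = c) (j : ι) :
    c * (Fintype.card ι - 1) = -1 := by
  have h := inner_sum_smul_of_inner_eq_const hv hc (fun _ => 1) j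
  simp only [one_smul, hsum, inner_zero_right, sum_const, card_univ, nsmul_eq_mul, mul_one] at h
  linarith

end InnerEqConst

section Simplex

variable {n : ℕ} {v w : Fin (n + 1) → EuclideanSpace ℝ (Fin n)}

theorem AffineIndependent.affineSpan_range_eq_top (hv : AffineIndependent ℝ v) :
    affineSpan ℝ (range v) = ⊤ :=
  hv.affineSpan_eq_top_iff_card_eq_finrank_add_one.mpr (by simp)

noncomputable def homogMatrix (v : Fin (n + 1) → EuclideanSpace ℝ (Fin n)) :
    Matrix (Fin (n + 1)) (Fin (n + 1)) ℝ :=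
  Matrix.of fun i => Fin.snoc (v i).ofLp 1

theorem homogMatrix_mul_transpose (v : Fin (n + 1) → EuclideanSpace ℝ (Fin n)) :
    homogMatrix v * (homogMatrix v)ᵀ = Matrix.of fun i j => inner ℝ (v i) (v j) + 1 := by
  ext i j
  simp [Matrix.mul_apply, homogMatrix, Fin.sum_univ_castSucc, PiLp.inner_apply, mul_comm]

theorem abs_det_homogMatrix_eq_of_inner_eq
    (h : ∀ i j, inner ℝ (v i) (v j) = inner ℝ (w i) (w j)) :
    |(homogMatrix v).det| = |(homogMatrix w).det| := by
  have hsq : ∀ u : Fin (n + 1) → EuclideanSpace ℝ (Fin n), (homogMatrix u).det ^ 2 =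
      (Matrix.of fun i j => inner ℝ (u i) (u j) + 1 : Matrix _ _ ℝ).det := fun u => by
    rw [← homogMatrix_mul_transpose, det_mul, det_transpose, sq]
  rw [← sq_eq_sq₀ (abs_nonneg _) (abs_nonneg _), sq_abs, sq_abs, hsq, hsq]
  simp only [h]

theorem det_homogMatrix_ne_zero (hv : AffineIndependent ℝ v) : (homogMatrix v).det ≠ 0 := by
  intro h0
  obtain ⟨g, hg, hgM⟩ := exists_vecMul_eq_zero_iff.mpr h0
  have hcol : ∀ j, ∑ i, g i * homogMatrix v i j = 0 := fun j => congrFun hgM j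
  have hsum : ∑ i, g i = 0 := by simpa [homogMatrix] using hcol (Fin.last n)
  have hcomb : ∑ i, g i • v i = 0 := by
    ext j
    simpa [homogMatrix] using hcol j.castSucc
  rw [affineIndependent_iff_of_fintype] at hv
  exact hg (funext (hv g hsum (by rw [Finset.weightedVSub_eq_linear_combination _ hsum, hcomb])))

theorem det_homogMatrix_eq_zero_of_eq {i j : Fin (n + 1)} (hij : i ≠ j) (h : v i = v j) :
    (homogMatrix v).det = 0 :=
  det_zero_of_row_eq hij (by ext; simp [homogMatrix, h])

theorem homogMatrix_update (v : Fin (n + 1) → EuclideanSpace ℝ (Fin n)) (k : Fin (n + 1))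
    (z : EuclideanSpace ℝ (Fin n)) :
    homogMatrix (Function.update v k z) = (homogMatrix v).updateRow k (Fin.snoc z.ofLp 1) := by
  ext i j
  rcases eq_or_ne i k with rfl | h
  · simp [homogMatrix]
  · simp [homogMatrix, h]

theorem exists_det_homogMatrix_update_eq (v : Fin (n + 1) → EuclideanSpace ℝ (Fin n))
    (k : Fin (n + 1)) : ∃ (a : EuclideanSpace ℝ (Fin n)) (b : ℝ),
      ∀ z, (homogMatrix (Function.update v k z)).det = inner ℝ a z + b := by
  let ℓ : (Fin (n + 1) → ℝ) →ₗ[ℝ] ℝ :=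
    (detRowAlternating (n := Fin (n + 1)) (R := ℝ)).toMultilinearMap.toLinearMap (homogMatrix v) k
  have hℓ : ∀ r, ((homogMatrix v).updateRow k r).det = ℓ r := fun r => rfl
  refine ⟨WithLp.toLp 2 fun j => ℓ (Pi.single j.castSucc 1), ℓ (Pi.single (Fin.last n) 1),
    fun z => ?_⟩
  rw [homogMatrix_update, hℓ, LinearMap.pi_apply_eq_sum_univ ℓ, Fin.sum_univ_castSucc]
  simp [PiLp.inner_apply, eq_comm, ← Pi.single_apply]

theorem det_homogMatrix_comp (v : Fin (n + 1) → EuclideanSpace ℝ (Fin n))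
    (G : EuclideanSpace ℝ (Fin n) →ᵃ[ℝ] EuclideanSpace ℝ (Fin n)) :
    (homogMatrix (G ∘ v)).det = (homogMatrix v).det * LinearMap.det G.linear := by
  let b := (EuclideanSpace.basisFun (Fin n) ℝ).toBasis
  let A := LinearMap.toMatrix b b G.linear
  -- `Q = [[Aᵀ, 0], [G 0, 1]]` in block form
  let Q : Matrix (Fin (n + 1)) (Fin (n + 1)) ℝ :=
    Fin.snoc (fun k => Fin.snoc (fun j => A j k) 0) (Fin.snoc (G 0).ofLp 1)
  have hA : ∀ z j, G.linear z j = ∑ k, A j k * z k := fun z j => by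
    simpa [b, A, Matrix.mulVec, dotProduct] using
      (congrFun (LinearMap.toMatrix_mulVec_repr b b G.linear z) j).symm
  have hprod : homogMatrix (G ∘ v) = homogMatrix v * Q := by
    ext i j
    rw [Matrix.mul_apply, Fin.sum_univ_castSucc]
    refine Fin.lastCases ?_ (fun j => ?_) j
    · simp [homogMatrix, Q]
    · simp only [homogMatrix, Q, of_apply, Function.comp_apply, Fin.snoc_castSucc, Fin.snoc_last]
      rw [congrFun G.decomp, Pi.add_apply, PiLp.add_apply, hA, one_mul]
      simp only [mul_comm]
  have hQ : Q.det = A.det := by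
    rw [det_succ_column Q (Fin.last n), Finset.sum_eq_single (Fin.last n)]
    · have hsub : Q.submatrix (Fin.last n).succAbove (Fin.last n).succAbove = Aᵀ := by
        ext k j
        simp [Q, Matrix.submatrix]
      rw [hsub, det_transpose]
      simp [Q]
    · intro k _ hk
      obtain ⟨k, rfl⟩ := Fin.exists_castSucc_eq.mpr hk
      simp [Q]
    · simp
  rw [hprod, det_mul, hQ, LinearMap.det_toMatrix]

theorem continuous_det_homogMatrix :
    Continuous fun v : Fin (n + 1) → EuclideanSpace ℝ (Fin n) => (homogMatrix v).det := by
  refine Continuous.matrix_det (continuous_matrix fun i j => ?_)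
  refine Fin.lastCases ?_ (fun j => ?_) j
  · simpa [homogMatrix] using continuous_const
  · simp only [homogMatrix, of_apply, Fin.snoc_castSucc]
    fun_prop

def IsInscribedRegularSimplex (v : Fin (n + 1) → EuclideanSpace ℝ (Fin n)) : Prop :=
  (∀ i, ‖v i‖ = 1) ∧ ∀ i j, i ≠ j → inner ℝ (v i) (v j) = -1 / n

namespace IsInscribedRegularSimplex

theorem of_inner_eq_const (hn : 1 ≤ n) (hinj : Function.Injective v) (hv : ∀ i, ‖v i‖ = 1)
    {c : ℝ} (hc : ∀ i j, i ≠ j → inner ℝ (v i) (v j) = c) : IsInscribedRegularSimplex v := by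
  have hc1 : c ≠ 1 := by
    obtain ⟨i, j, hij⟩ := (Fin.nontrivial_iff_two_le.mpr (by omega : 2 ≤ n + 1)).exists_pair_ne
    rintro rfl
    exact hij (hinj ((inner_eq_one_iff_of_norm_eq_one (hv i) (hv j)).mp (hc i j hij)))
  have h := mul_card_sub_one_eq_neg_one_of_sum_eq_zero
    (sum_eq_zero_of_inner_eq_const (by simp) hv hc hc1) hv hc 0
  simp only [Fintype.card_fin, Nat.cast_add, Nat.cast_one, add_sub_cancel_right] at h
  refine ⟨hv, fun i j hij => ?_⟩
  rw [hc i j hij, eq_div_iff (by rintro h0; simp [h0] at h), h]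

theorem of_dist_eq (hn : 1 ≤ n) (hinj : Function.Injective v) {d : ℝ}
    (hd : ∀ i j, i ≠ j → dist (v i) (v j) = d) (hv : ∀ i, ‖v i‖ = 1) :
    IsInscribedRegularSimplex v := by
  refine of_inner_eq_const hn hinj hv (c := 1 - d ^ 2 / 2) fun i j hij => ?_
  have h := norm_sub_sq_real (v i) (v j)
  rw [← dist_eq_norm, hd i j hij, hv, hv] at h
  linarith

theorem sum_eq_zero (hv : IsInscribedRegularSimplex v) : ∑ i, v i = 0 := by
  refine sum_eq_zero_of_inner_eq_const (by simp) hv.1 hv.2 fun h => ?_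
  have : -1 / (n : ℝ) ≤ 0 := div_nonpos_of_nonpos_of_nonneg (by norm_num) n.cast_nonneg
  linarith

theorem inner_eq (hv : IsInscribedRegularSimplex v) (hw : IsInscribedRegularSimplex w)
    (i j : Fin (n + 1)) : inner ℝ (v i) (v j) = inner ℝ (w i) (w j) := by
  rcases eq_or_ne i j with rfl | h
  · rw [real_inner_self_eq_norm_sq, real_inner_self_eq_norm_sq, hv.1, hw.1]
  · rw [hv.2 i j h, hw.2 i j h]

theorem norm_map (hv : IsInscribedRegularSimplex v) (hw : IsInscribedRegularSimplex w)
    (hspan : affineSpan ℝ (range v) = ⊤)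
    {G : EuclideanSpace ℝ (Fin n) →ᵃ[ℝ] EuclideanSpace ℝ (Fin n)} (hG : ⇑G ∘ v = w)
    (z : EuclideanSpace ℝ (Fin n)) : ‖G z‖ = ‖z‖ := by
  have hG0 : G 0 = 0 := by
    have h : ∑ i, (G.linear (v i) + G 0) = ∑ i, w i := by
      rw [← hG]
      exact sum_congr rfl fun i _ => (congrFun G.decomp (v i)).symm
    rw [sum_add_distrib, ← map_sum, hv.sum_eq_zero, hw.sum_eq_zero, map_zero, zero_add, sum_const,
      card_univ, ← Nat.cast_smul_eq_nsmul ℝ] at h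
    exact (smul_eq_zero.mp h).resolve_left (by positivity)
  have hlin : ∀ z, G z = G.linear z := fun z => by
    rw [congrFun G.decomp, hG0, Pi.add_apply, add_zero]
  have hlinspan : Submodule.span ℝ (range v) = ⊤ :=
    eq_top_iff.mpr fun z _ => affineSpan_subset_span (hspan ▸ AffineSubspace.mem_top ℝ _ z)
  have hinner := inner_map_map_of_span_eq_top hlinspan (L := G.linear) fun i j => by
    rw [← hlin, ← hlin, ← Function.comp_apply (f := G), ← Function.comp_apply (f := G), hG,
      hw.inner_eq hv]
  rw [hlin, ← sq_eq_sq₀ (norm_nonneg _) (norm_nonneg _), ← real_inner_self_eq_norm_sq,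
    ← real_inner_self_eq_norm_sq, hinner]

end IsInscribedRegularSimplex

abbrev simplicesInBall (n : ℕ) : Set (Fin (n + 1) → EuclideanSpace ℝ (Fin n)) :=
  univ.pi fun _ => closedBall 0 1

theorem exists_isMaxOn_abs_det_homogMatrix (n : ℕ) : ∃ m ∈ simplicesInBall n,
    IsMaxOn (fun v => |(homogMatrix v).det|) (simplicesInBall n) m :=
  (isCompact_univ_pi fun _ => isCompact_closedBall 0 1).exists_isMaxOn ⟨fun _ => 0, by simp⟩
    continuous_det_homogMatrix.abs.continuousOn

theorem norm_eq_one_and_inner_eq_const_of_isMaxOn (hn : 1 ≤ n) (hv : v ∈ simplicesInBall n)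
    (hmax : IsMaxOn (fun v => |(homogMatrix v).det|) (simplicesInBall n) v)
    (hdet : (homogMatrix v).det ≠ 0) (k : Fin (n + 1)) :
    ‖v k‖ = 1 ∧ ∃ c : ℝ, ∀ i, i ≠ k → inner ℝ (v k) (v i) = c := by
  obtain ⟨a, b, hab⟩ := exists_det_homogMatrix_update_eq v k
  have hface : ∀ i, i ≠ k → inner ℝ a (v i) + b = 0 := fun i hik => by
    rw [← hab]
    exact det_homogMatrix_eq_zero_of_eq hik (by simp [hik])
  have ha : a ≠ 0 := by
    rintro rfl
    have := Fin.nontrivial_iff_two_le.mpr (by omega : 2 ≤ n + 1)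
    obtain ⟨i, hik⟩ := exists_ne k
    apply hdet
    rw [← Function.update_eq_self k v, hab, ← hface i hik, inner_zero_left, inner_zero_left]
  have hmax_k : IsMaxOn (fun z => |inner ℝ a z + b|) (closedBall 0 1) (v k) :=
    isMaxOn_iff.mpr fun z hz => by
      simp only [← hab, Function.update_eq_self]
      refine isMaxOn_iff.mp hmax _ fun i _ => ?_
      rcases eq_or_ne i k with rfl | hik
      · simpa using hz
      · simpa [hik] using hv i trivial
  obtain ⟨hk, r, hr, rfl⟩ := norm_eq_one_and_exists_smul_of_isMaxOn ha (hv k trivial) hmax_k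
  refine ⟨hk, -b / r, fun i hik => ?_⟩
  rw [eq_div_iff hr, mul_comm, ← real_inner_smul_left]
  linarith [hface i hik]

theorem IsInscribedRegularSimplex.of_isMaxOn (hn : 1 ≤ n) (hv : v ∈ simplicesInBall n)
    (hmax : IsMaxOn (fun v => |(homogMatrix v).det|) (simplicesInBall n) v)
    (hdet : (homogMatrix v).det ≠ 0) : IsInscribedRegularSimplex v := by
  choose hnorm c hc using norm_eq_one_and_inner_eq_const_of_isMaxOn hn hv hmax hdet
  have hc_eq : ∀ k l, k ≠ l → c k = c l := fun k l hkl => by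
    rw [← hc k l hkl.symm, ← hc l k hkl, real_inner_comm]
  refine of_inner_eq_const hn (fun i j h => by_contra fun hij => hdet
    (det_homogMatrix_eq_zero_of_eq hij h)) hnorm (c := c 0) fun i j hij => ?_
  rcases eq_or_ne i 0 with rfl | hi
  · exact hc 0 j hij.symm
  · rw [hc i j hij.symm, hc_eq i 0 hi]

theorem IsInscribedRegularSimplex.isMaxOn (hn : 1 ≤ n) (hv : IsInscribedRegularSimplex v)
    (hdet : (homogMatrix v).det ≠ 0) :
    IsMaxOn (fun v => |(homogMatrix v).det|) (simplicesInBall n) v := by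
  obtain ⟨m, hm, hmax⟩ := exists_isMaxOn_abs_det_homogMatrix n
  have hle : |(homogMatrix v).det| ≤ |(homogMatrix m).det| :=
    hmax fun i _ => by simp [hv.1 i]
  have hm_reg := IsInscribedRegularSimplex.of_isMaxOn hn hm hmax
    (abs_pos.mp ((abs_pos.mpr hdet).trans_le hle))
  refine isMaxOn_iff.mpr fun u hu => ?_
  rw [abs_det_homogMatrix_eq_of_inner_eq (hv.inner_eq hm_reg)]
  exact isMaxOn_iff.mp hmax u hu

theorem IsInscribedRegularSimplex.of_comp_of_one_le_abs_det (hn : 1 ≤ n)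
    (hv : IsInscribedRegularSimplex v) (hv_ind : AffineIndependent ℝ v) (hw : w ∈ simplicesInBall n)
    {G : EuclideanSpace ℝ (Fin n) →ᵃ[ℝ] EuclideanSpace ℝ (Fin n)} (hG : ⇑G ∘ v = w)
    (hdetG : 1 ≤ |LinearMap.det G.linear|) : IsInscribedRegularSimplex w := by
  have hdet_v := det_homogMatrix_ne_zero hv_ind
  have hdet_w : (homogMatrix w).det = (homogMatrix v).det * LinearMap.det G.linear := by
    rw [← hG, det_homogMatrix_comp]
  refine .of_isMaxOn hn hw (isMaxOn_iff.mpr fun u hu => ?_) ?_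
  · refine (isMaxOn_iff.mp (hv.isMaxOn hn hdet_v) u hu).trans ?_
    rw [hdet_w, abs_mul]
    exact le_mul_of_one_le_right (abs_nonneg _) hdetG
  · rw [hdet_w]
    exact mul_ne_zero hdet_v (abs_pos.mp (one_pos.trans_le hdetG))

theorem IsLagrangeBasis.comp_eq {x s : Fin (n + 1) → EuclideanSpace ℝ (Fin n)}
    {lam lam' : Fin (n + 1) → EuclideanSpace ℝ (Fin n) → ℝ} (hlam : IsLagrangeBasis x lam)
    (hlam' : IsLagrangeBasis s lam') (hs : affineSpan ℝ (range s) = ⊤)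
    {H : EuclideanSpace ℝ (Fin n) →ᵃ[ℝ] EuclideanSpace ℝ (Fin n)} (hH : ⇑H ∘ s = x)
    (j : Fin (n + 1)) : lam j ∘ H = lam' j := by
  obtain ⟨L, hL⟩ := (hlam j).1
  obtain ⟨L', hL'⟩ := (hlam' j).1
  have hLL' : L.comp H = L' := AffineMap.ext_on hs <| by
    rintro _ ⟨i, rfl⟩
    rw [AffineMap.coe_comp, Function.comp_apply, ← hL, ← hL', ← Function.comp_apply (f := H), hH,
      (hlam j).2, (hlam' j).2]
  rw [hL, hL', ← hLL', AffineMap.coe_comp]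

theorem IsMinimalEllipsoid.one_le_abs_det {S E : Set (EuclideanSpace ℝ (Fin n))}
    (hE : IsMinimalEllipsoid S E)
    {F G : EuclideanSpace ℝ (Fin n) ≃ᵃ[ℝ] EuclideanSpace ℝ (Fin n)}
    (hF : E = F '' closedBall 0 1) (hS : S ⊆ F '' (G '' closedBall 0 1)) :
    1 ≤ |LinearMap.det G.toAffineMap.linear| := by
  have hvol := hE.2.2 _ ⟨G.trans F, by rw [AffineEquiv.coe_trans, image_comp]⟩ hS
  rw [hF, ← F.coe_toAffineMap, ← G.coe_toAffineMap, Measure.addHaar_image_affineMap,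
    Measure.addHaar_image_affineMap, Measure.addHaar_image_affineMap,
    ← mul_assoc, mul_comm _ (ENNReal.ofReal _), mul_assoc] at hvol
  set a := ENNReal.ofReal |LinearMap.det F.toAffineMap.linear| *
    volume (closedBall (0 : EuclideanSpace ℝ (Fin n)) 1)
  have ha : a ≠ 0 := mul_ne_zero (by simpa using (LinearEquiv.isUnit_det' F.linear).ne_zero)
    (measure_closedBall_pos _ 0 one_pos).ne'
  have ha' : a ≠ ⊤ := ENNReal.mul_ne_top ENNReal.ofReal_ne_top measure_closedBall_lt_top.ne
  nth_rw 1 [← one_mul a] at hvol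
  exact ENNReal.one_le_ofReal.mp ((ENNReal.mul_le_mul_iff_left ha ha').mp hvol)

end Simplex

theorem norm_on_minimal_ellipsoid_eq_norm_of_regular_on_ball
    {n : ℕ} (hn : 1 ≤ n)
    (x : Fin (n + 1) → EuclideanSpace ℝ (Fin n))
    (hind : AffineIndependent ℝ x)
    (lam : Fin (n + 1) → EuclideanSpace ℝ (Fin n) → ℝ)
    (hlam : IsLagrangeBasis x lam)
    (E : Set (EuclideanSpace ℝ (Fin n)))
    (hE : IsMinimalEllipsoid (convexHull ℝ (Set.range x)) E)
    (s : Fin (n + 1) → EuclideanSpace ℝ (Fin n))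
    (hsind : AffineIndependent ℝ s)
    (hsreg : ∃ d : ℝ, ∀ i j, i ≠ j → dist (s i) (s j) = d)
    (hsins : ∀ j, ‖s j‖ = 1)
    (lam' : Fin (n + 1) → EuclideanSpace ℝ (Fin n) → ℝ)
    (hlam' : IsLagrangeBasis s lam') :
    sSup ((fun z => ∑ j, |lam j z|) '' E) =
      sSup ((fun z => ∑ j, |lam' j z|) ''
        Metric.closedBall (0 : EuclideanSpace ℝ (Fin n)) 1) := by
  obtain ⟨⟨F, hF⟩, hxE, -⟩ := id hE
  obtain ⟨d, hd⟩ := hsreg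
  have hs := IsInscribedRegularSimplex.of_dist_eq hn hsind.injective hd hsins
  let y := F.symm ∘ x
  have hFy : ⇑F ∘ y = x := by ext1 i; simp [y]
  have hy_ball : y ∈ simplicesInBall n := fun i _ => by
    obtain ⟨z, hz, hzx⟩ := hF ▸ hxE (subset_convexHull ℝ _ (mem_range_self i))
    simpa [y, ← hzx] using hz
  have hy_ind : AffineIndependent ℝ y := hind.map' F.symm.toAffineMap F.symm.injective
  obtain ⟨G, hG⟩ := AffineBasis.exists_affineEquiv_comp_eq
    ⟨s, hsind, hsind.affineSpan_range_eq_top⟩ ⟨y, hy_ind, hy_ind.affineSpan_range_eq_top⟩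
  change ⇑G ∘ s = y at hG
  have hdetG := hE.one_le_abs_det hF <| convexHull_min (range_subset_iff.mpr fun i =>
      ⟨G (s i), ⟨s i, by simp [hsins], rfl⟩, by rw [← hFy, ← hG]; rfl⟩)
    (((convex_closedBall 0 1).affine_image G.toAffineMap).affine_image F.toAffineMap)
  have hy := hs.of_comp_of_one_le_abs_det hn hsind hy_ball (G := G.toAffineMap) hG hdetG
  have hball := G.image_closedBall_zero
    (hs.norm_map hy hsind.affineSpan_range_eq_top (G := G.toAffineMap) hG) 1
  have hlamG := hlam.comp_eq hlam' hsind.affineSpan_range_eq_top (H := (G.trans F).toAffineMap)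
    (by rw [AffineEquiv.coe_toAffineMap, AffineEquiv.coe_trans, Function.comp_assoc, hG, hFy])
  rw [show E = (⇑F ∘ ⇑G) '' closedBall 0 1 by rw [image_comp, hball, hF], ← image_comp]
  congr 2
  funext z
  simp [← hlamG]
end

section
/- Let x⁽¹⁾,…,x⁽ⁿ⁺¹⁾ be affinely independent points in the closed unit ball B_n of ℝⁿ, and let c = (1/(n+1))·Σ_{j=1}^{n+1} x⁽ʲ⁾ be their centroid. Then there exists an index j ∈ {1,…,n+1} such that ‖2c − x⁽ʲ⁾‖ ≤ 1, i.e., the reflection of the vertex x⁽ʲ⁾ through c again lies in B_n. -/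
/-! The inner products `⟪c, x j⟫` average to `‖c‖²`, so some vertex satisfies
`‖c‖² ≤ ⟪c, x j⟫`. For that vertex `‖2c - x j‖² = ‖x j‖² - 4 (⟪c, x j⟫ - ‖c‖²) ≤ ‖x j‖² ≤ 1`. -/

open Finset RealInnerProductSpace

section InnerProductSpace

variable {E : Type*} [NormedAddCommGroup E] [InnerProductSpace ℝ E]

theorem exists_norm_sq_le_inner_of_sum_eq_card_smul {ι : Type*} [Fintype ι] [Nonempty ι]
    (x : ι → E) (c : E) (hc : ∑ j, x j = (Fintype.card ι : ℝ) • c) :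
    ∃ j, ‖c‖ ^ 2 ≤ ⟪c, x j⟫ := by
  have hsum : ∑ j, ⟪c, x j⟫ = ∑ _j : ι, ‖c‖ ^ 2 := by
    rw [← inner_sum, hc, real_inner_smul_right, real_inner_self_eq_norm_sq, sum_const,
      card_univ, nsmul_eq_mul]
  obtain ⟨j, -, hj⟩ := exists_le_of_sum_le univ_nonempty hsum.ge
  exact ⟨j, hj⟩

theorem norm_two_smul_sub_le_of_norm_sq_le_inner {c y : E} (h : ‖c‖ ^ 2 ≤ ⟪c, y⟫) :
    ‖(2 : ℝ) • c - y‖ ≤ ‖y‖ := by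
  have hsq : ‖(2 : ℝ) • c - y‖ ^ 2 = ‖y‖ ^ 2 - 4 * (⟪c, y⟫ - ‖c‖ ^ 2) := by
    rw [norm_sub_sq_real, norm_smul, real_inner_smul_left, Real.norm_ofNat]
    ring
  rw [← sq_le_sq₀ (norm_nonneg _) (norm_nonneg _), hsq]
  linarith

end InnerProductSpace

theorem exists_vertex_with_reflection_in_ball_general
    {n : ℕ}
    (x : Fin (n + 1) → EuclideanSpace ℝ (Fin n))
    (hx : ∀ j, x j ∈ Metric.closedBall (0 : EuclideanSpace ℝ (Fin n)) 1)
    (c : EuclideanSpace ℝ (Fin n))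
    (hc : c = (((n : ℝ) + 1)⁻¹) • ∑ j, x j) :
    ∃ j, ‖(2 : ℝ) • c - x j‖ ≤ 1 := by
  have hsum : ∑ j, x j = (Fintype.card (Fin (n + 1)) : ℝ) • c := by
    rw [hc, smul_smul, Fintype.card_fin, Nat.cast_succ, mul_inv_cancel₀ (by positivity),
      one_smul]
  obtain ⟨j, hj⟩ := exists_norm_sq_le_inner_of_sum_eq_card_smul x c hsum
  exact ⟨j, (norm_two_smul_sub_le_of_norm_sq_le_inner hj).trans
    (mem_closedBall_zero_iff.mp (hx j))⟩

theorem exists_vertex_with_reflection_in_ball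
    {n : ℕ}
    (x : Fin (n + 1) → EuclideanSpace ℝ (Fin n))
    (hind : AffineIndependent ℝ x)
    (hx : ∀ j, x j ∈ Metric.closedBall (0 : EuclideanSpace ℝ (Fin n)) 1)
    (c : EuclideanSpace ℝ (Fin n))
    (hc : c = (((n : ℝ) + 1)⁻¹) • ∑ j, x j) :
    ∃ j, ‖(2 : ℝ) • c - x j‖ ≤ 1 :=
  exists_vertex_with_reflection_in_ball_general x hx c hc
end

section
/- Let 1 ≤ n ≤ 4. For every nondegenerate simplex with vertices x⁽¹⁾,…,x⁽ⁿ⁺¹⁾ in the closed unit ball B_n of ℝⁿ, with basic Lagrange polynomials λ₁,…,λ_{n+1}, and every regular simplex with vertices s⁽¹⁾,…,s⁽ⁿ⁺¹⁾ inscribed into B_n, with basic Lagrange polynomials λ′₁,…,λ′_{n+1}, one has max_{x∈B_n} Σ_{j=1}^{n+1} |λⱼ(x)| ≥ max_{x∈B_n} Σ_{j=1}^{n+1} |λ′ⱼ(x)|; hence the minimal norm θ_n(B_n) of an interpolation projector with nodes in B_n is attained at the vertices of a regular inscribed simplex. -/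
/-!
For any simplex with vertices `x j` in the unit ball, the affine function `λ j` takes the value
`2 λ j (0) - 1` at `-x j`. These values add up to `1 - n`, so one of them is at most
`(1 - n) / (n + 1)`, and at that point `∑ |λ i| ≥ |λ j| + |1 - λ j| ≥ (3n - 1) / (n + 1)`.

For a regular simplex inscribed in the sphere, `∑ s j = 0` and `n ⟪s i, s j⟫ = -1`, so
`λ' j z = (1 + n t j) / (n + 1)` with `t j = ⟪s j, z⟫`, `∑ t j = 0` and
`n ∑ t j ^ 2 = (n + 1) ‖z‖ ^ 2`. If `1 + n t j < 0` exactly for the `k` indices in `A`,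
Cauchy–Schwarz gives `n (∑_A t) ^ 2 ≤ k (n + 1 - k)`, and `∑ |1 + n t j| ≤ 3n - 1` follows from
`n k (n + 1 - k) ≤ (n - 1 + k) ^ 2`, which holds for every `k` exactly when `n ≤ 4`.
-/

open Finset RealInnerProductSpace

section RealFamilies

variable {ι : Type*} [Fintype ι]

theorem one_sub_two_mul_le_sum_abs {a : ι → ℝ} (ha : ∑ i, a i = 1) (j : ι) :
    1 - 2 * a j ≤ ∑ i, |a i| := by
  classical
  have hrest : ∑ i ∈ univ.erase j, a i = 1 - a j := by
    rw [← ha, ← add_sum_erase univ a (mem_univ j)]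
    ring
  calc 1 - 2 * a j ≤ |a j| + |∑ i ∈ univ.erase j, a i| := by
        rw [hrest]
        linarith [neg_le_abs (a j), le_abs_self (1 - a j)]
    _ ≤ |a j| + ∑ i ∈ univ.erase j, |a i| := by grw [abs_sum_le_sum_abs]
    _ = ∑ i, |a i| := add_sum_erase univ (fun i => |a i|) (mem_univ j)

theorem sum_abs_eq_sum_sub_two_mul_sum_filter_neg (a : ι → ℝ) :
    ∑ i, |a i| = ∑ i, a i - 2 * ∑ i ∈ univ.filter (fun i => a i < 0), a i := by
  rw [sum_filter, mul_sum, ← sum_sub_distrib]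
  refine sum_congr rfl fun i _ => ?_
  split_ifs with h
  · rw [abs_of_neg h]; ring
  · rw [abs_of_nonneg (not_lt.mp h)]; ring

/-- Cauchy–Schwarz against `N • 1_A - #A`, which is orthogonal to the constants. -/
theorem card_mul_sq_sum_le_of_sum_eq_zero {t : ι → ℝ} (ht : ∑ i, t i = 0) (A : Finset ι) :
    (Fintype.card ι : ℝ) * (∑ i ∈ A, t i) ^ 2 ≤
      #A * (Fintype.card ι - #A : ℝ) * ∑ i, t i ^ 2 := by
  classical
  set N : ℝ := (Fintype.card ι : ℝ)
  set k : ℝ := (#A : ℝ)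
  set u : ι → ℝ := fun i => N * (if i ∈ A then 1 else 0) - k
  have hut : ∑ i, u i * t i = N * ∑ i ∈ A, t i := by
    simp only [u, sub_mul, sum_sub_distrib, ← mul_sum, ht, mul_assoc, ite_mul, one_mul, zero_mul,
      sum_ite_mem, univ_inter]
    ring
  have huu : ∑ i, u i ^ 2 = N * (k * (N - k)) := by
    have hu2 : ∀ i, u i ^ 2 = (N ^ 2 - 2 * N * k) * (if i ∈ A then 1 else 0) + k ^ 2 := by
      intro i
      by_cases hi : i ∈ A
      · simp only [u, hi, if_true]
        ring
      · simp only [u, hi, if_false]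
        ring
    simp only [hu2, sum_add_distrib, ← mul_sum, sum_boole, sum_const, card_univ, nsmul_eq_mul,
      filter_mem_eq_inter, univ_inter]
    ring
  have hcs := sum_mul_sq_le_sq_mul_sq univ u t
  rw [hut, huu] at hcs
  have hkN : k ≤ N := Nat.cast_le.mpr (card_le_univ A)
  have hrhs : 0 ≤ k * (N - k) * ∑ i, t i ^ 2 := by
    have : 0 ≤ k := by positivity
    have : 0 ≤ N - k := sub_nonneg.mpr hkN
    positivity
  rcases (show 0 ≤ N by positivity).eq_or_lt with hN | hN
  · calc N * (∑ i ∈ A, t i) ^ 2 = 0 := by rw [← hN, zero_mul]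
      _ ≤ _ := hrhs
  · nlinarith

theorem mul_mul_le_sq_of_le_four {n k : ℕ} (hn1 : 1 ≤ n) (hn4 : n ≤ 4) (hk : k ≤ n + 1) :
    (n : ℝ) * k * (n + 1 - k) ≤ (n - 1 + k) ^ 2 := by
  interval_cases n <;> interval_cases k <;> norm_num

end RealFamilies

theorem sum_abs_one_add_mul_le {n : ℕ} (hn1 : 1 ≤ n) (hn4 : n ≤ 4) {t : Fin (n + 1) → ℝ}
    (ht0 : ∑ j, t j = 0) (ht2 : n * ∑ j, t j ^ 2 ≤ n + 1) :
    ∑ j, |1 + n * t j| ≤ 3 * n - 1 := by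
  set A := univ.filter fun j => 1 + n * t j < 0
  set S := ∑ j ∈ A, t j
  have hsum : ∑ j, |1 + n * t j| = n + 1 - 2 * (#A + n * S) := by
    rw [sum_abs_eq_sum_sub_two_mul_sum_filter_neg, sum_add_distrib, sum_add_distrib, ← mul_sum,
      ← mul_sum, ht0]
    simp [A, S]
  have hS : n * S ^ 2 ≤ #A * (n + 1 - #A) := by
    have hcs := card_mul_sq_sum_le_of_sum_eq_zero ht0 A
    simp only [Fintype.card_fin, Nat.cast_add, Nat.cast_one] at hcs
    have hnonneg : (0 : ℝ) ≤ #A * (n + 1 - #A) := by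
      have : (#A : ℝ) ≤ n + 1 := by exact_mod_cast (card_le_univ A).trans_eq (Fintype.card_fin _)
      have : (0 : ℝ) ≤ n + 1 - #A := by linarith
      positivity
    nlinarith
  have hk := mul_mul_le_sq_of_le_four hn1 hn4 ((card_le_univ A).trans_eq (Fintype.card_fin _))
  have hsq : (n * S) ^ 2 ≤ (n - 1 + #A) ^ 2 := by nlinarith
  have hbase : (0 : ℝ) ≤ n - 1 + #A := by
    have : (1 : ℝ) ≤ n := by exact_mod_cast hn1
    linarith [(#A).cast_nonneg (α := ℝ)]
  have hnS : -(n - 1 + #A) ≤ n * S := (abs_le_of_sq_le_sq' hsq hbase).1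
  linarith

section RegularSimplex

variable {E : Type*} [NormedAddCommGroup E] [InnerProductSpace ℝ E]

theorem real_inner_eq_one_sub_dist_sq_div_two {a b : E} (ha : ‖a‖ = 1) (hb : ‖b‖ = 1) :
    ⟪a, b⟫ = 1 - dist a b ^ 2 / 2 := by
  rw [dist_eq_norm, norm_sub_sq_real, ha, hb]
  ring

theorem eq_zero_of_forall_inner_eq_of_affineSpan_eq_top {ι : Type*} {p : ι → E}
    (hspan : affineSpan ℝ (Set.range p) = ⊤) {v : E} {c : ℝ} (h : ∀ i, ⟪v, p i⟫ = c) : v = 0 := by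
  have hext := AffineMap.ext_on hspan (f := (innerₗ E v).toAffineMap) (g := AffineMap.const ℝ E c)
    (by rintro _ ⟨i, rfl⟩; simp [h])
  have h0 := congr($hext 0)
  have hv := congr($hext v)
  simp only [LinearMap.coe_toAffineMap, innerₗ_apply_apply, inner_zero_right,
    AffineMap.const_apply] at h0 hv
  rwa [← h0, inner_self_eq_zero] at hv

variable {n : ℕ} {s : Fin (n + 1) → E} {d : ℝ}

theorem inner_sum_eq_of_dist_eq (hd : ∀ i j, i ≠ j → dist (s i) (s j) = d)
    (hnorm : ∀ j, ‖s j‖ = 1) (i : Fin (n + 1)) :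
    ⟪s i, ∑ j, s j⟫ = 1 + n * (1 - d ^ 2 / 2) := by
  rw [inner_sum, ← add_sum_erase _ _ (mem_univ i), real_inner_self_eq_norm_sq, hnorm,
    sum_congr rfl fun j hj => by
      rw [real_inner_eq_one_sub_dist_sq_div_two (hnorm i) (hnorm j),
        hd i j (ne_of_mem_erase hj).symm],
    sum_const, card_erase_of_mem (mem_univ i), card_univ, Fintype.card_fin]
  simp

theorem sum_eq_zero_of_dist_eq (hspan : affineSpan ℝ (Set.range s) = ⊤)
    (hd : ∀ i j, i ≠ j → dist (s i) (s j) = d) (hnorm : ∀ j, ‖s j‖ = 1) : ∑ j, s j = 0 :=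
  eq_zero_of_forall_inner_eq_of_affineSpan_eq_top hspan fun i => by
    rw [real_inner_comm, inner_sum_eq_of_dist_eq hd hnorm i]

theorem mul_inner_eq_neg_one_of_dist_eq (hspan : affineSpan ℝ (Set.range s) = ⊤)
    (hd : ∀ i j, i ≠ j → dist (s i) (s j) = d) (hnorm : ∀ j, ‖s j‖ = 1) {i j : Fin (n + 1)}
    (hij : i ≠ j) : n * ⟪s i, s j⟫ = -1 := by
  have h := inner_sum_eq_of_dist_eq hd hnorm i
  rw [sum_eq_zero_of_dist_eq hspan hd hnorm, inner_zero_right] at h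
  rw [real_inner_eq_one_sub_dist_sq_div_two (hnorm i) (hnorm j), hd i j hij]
  linarith

theorem mul_sum_inner_sq_eq (hspan : affineSpan ℝ (Set.range s) = ⊤) (hsum : ∑ j, s j = 0)
    (hnorm : ∀ j, ‖s j‖ = 1) (hinner : ∀ i j, i ≠ j → n * ⟪s i, s j⟫ = -1) (z : E) :
    n * ∑ j, ⟪s j, z⟫ ^ 2 = (n + 1) * ‖z‖ ^ 2 := by
  classical
  set T : E →ₗ[ℝ] E := ∑ j, (n : ℝ) • (innerₗ E (s j)).smulRight (s j)
  have hT : ∀ w, T w = ∑ j, (n * ⟪s j, w⟫) • s j := by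
    intro w
    simp [T, mul_smul]
  have hspan' : Submodule.span ℝ (Set.range s) = ⊤ :=
    Submodule.eq_top_iff'.mpr fun v => affineSpan_subset_span (hspan ▸ AffineSubspace.mem_top ℝ E v)
  have hTid : T = ((n : ℝ) + 1) • LinearMap.id := by
    refine LinearMap.ext_on_range hspan' fun i => ?_
    have hterm : ∀ j, (n * ⟪s j, s i⟫) • s j = -s j + if j = i then ((n : ℝ) + 1) • s i else 0 := by
      intro j
      split_ifs with h
      · subst h
        rw [real_inner_self_eq_norm_sq, hnorm]
        module
      · rw [hinner j i h]
        module
    rw [hT, sum_congr rfl fun j _ => hterm j, sum_add_distrib, sum_neg_distrib, hsum,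
      sum_ite_eq' univ i]
    simp
  calc n * ∑ j, ⟪s j, z⟫ ^ 2 = ⟪T z, z⟫ := by
        rw [hT, sum_inner, mul_sum]
        refine sum_congr rfl fun j _ => ?_
        rw [real_inner_smul_left]
        ring
    _ = (n + 1) * ‖z‖ ^ 2 := by
        rw [hTid, LinearMap.smul_apply, LinearMap.id_apply, real_inner_smul_left,
          real_inner_self_eq_norm_sq]

end RegularSimplex

theorem AffineMap.map_neg_add_map {k V W : Type*} [Ring k] [AddCommGroup V] [Module k V]
    [AddCommGroup W] [Module k W] (f : V →ᵃ[k] W) (p : V) : f (-p) + f p = 2 • f 0 := by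
  rw [f.decomp]
  simp only [Pi.add_apply, map_neg, map_zero, zero_add]
  abel

theorem AffineIndependent.affineSpan_eq_top_of_finrank_eq {k V P : Type*} [DivisionRing k]
    [AddCommGroup V] [Module k V] [AddTorsor V P] [FiniteDimensional k V] {n : ℕ}
    {x : Fin (n + 1) → P} (hx : AffineIndependent k x) (hV : Module.finrank k V = n) :
    affineSpan k (Set.range x) = ⊤ :=
  hx.affineSpan_eq_top_iff_card_eq_finrank_add_one.mpr (by simp [hV])

namespace IsLagrangeBasis

variable {n : ℕ} {b : AffineBasis (Fin (n + 1)) ℝ (EuclideanSpace ℝ (Fin n))}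
  {lam : Fin (n + 1) → EuclideanSpace ℝ (Fin n) → ℝ}

theorem eq_coord (h : IsLagrangeBasis b lam) (j : Fin (n + 1)) : lam j = b.coord j := by
  obtain ⟨L, hL⟩ := (h j).1
  rw [hL, AffineMap.ext_on b.tot (f := L) (g := b.coord j)]
  rintro _ ⟨i, rfl⟩
  rw [← hL, (h j).2, b.coord_apply]
  exact if_congr eq_comm rfl rfl

theorem unique {lam' : Fin (n + 1) → EuclideanSpace ℝ (Fin n) → ℝ} (h : IsLagrangeBasis b lam)
    (h' : IsLagrangeBasis b lam') : lam = lam' :=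
  funext fun j => (h.eq_coord j).trans (h'.eq_coord j).symm

theorem sum_eq_one (h : IsLagrangeBasis b lam) (z : EuclideanSpace ℝ (Fin n)) :
    ∑ j, lam j z = 1 := by
  simp only [h.eq_coord, b.sum_coord_apply_eq_one]

theorem continuous (h : IsLagrangeBasis b lam) (j : Fin (n + 1)) : Continuous (lam j) := by
  rw [h.eq_coord]
  exact (b.coord j).continuous_of_finiteDimensional

theorem exists_le_sum_abs (h : IsLagrangeBasis b lam) (hb : ∀ j, ‖b j‖ ≤ 1) :
    ∃ z ∈ Metric.closedBall 0 1, ((3 * n - 1) / (n + 1) : ℝ) ≤ ∑ j, |lam j z| := by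
  have hanti : ∀ j, lam j (-b j) = 2 * lam j 0 - 1 := fun j => by
    have := (b.coord j).map_neg_add_map (b j)
    rw [← h.eq_coord, (h j).2, if_pos rfl, two_nsmul] at this
    linarith
  have hsum : ∑ j, lam j (-b j) = ∑ _j : Fin (n + 1), ((1 - n) / (n + 1) : ℝ) := by
    rw [sum_congr rfl fun j _ => hanti j, sum_sub_distrib, ← mul_sum, h.sum_eq_one]
    simp only [mul_one, sum_const, card_univ, Fintype.card_fin, nsmul_eq_mul, Nat.cast_add,
      Nat.cast_one]
    field_simp
    ring
  obtain ⟨j, -, hj⟩ := exists_le_of_sum_le univ_nonempty hsum.le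
  refine ⟨-b j, by simpa using hb j, ?_⟩
  calc ((3 * n - 1) / (n + 1) : ℝ) = 1 - 2 * ((1 - n) / (n + 1)) := by field_simp; ring
    _ ≤ 1 - 2 * lam j (-b j) := by linarith
    _ ≤ ∑ i, |lam i (-b j)| := one_sub_two_mul_le_sum_abs (h.sum_eq_one _) j

end IsLagrangeBasis

theorem isLagrangeBasis_of_mul_inner_eq_neg_one {n : ℕ} {s : Fin (n + 1) → EuclideanSpace ℝ (Fin n)}
    (hnorm : ∀ j, ‖s j‖ = 1) (hinner : ∀ i j, i ≠ j → n * ⟪s i, s j⟫ = -1) :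
    IsLagrangeBasis s fun j z => (1 + n * ⟪s j, z⟫) / (n + 1) := by
  intro j
  refine ⟨⟨((n : ℝ) / (n + 1)) • (innerₗ _ (s j)).toAffineMap +
    AffineMap.const ℝ (EuclideanSpace ℝ (Fin n)) (1 / (n + 1) : ℝ),
    ?_⟩, fun i => ?_⟩
  · funext z
    simp only [one_div, AffineMap.coe_add, AffineMap.coe_smul, LinearMap.coe_toAffineMap,
      AffineMap.coe_const, Pi.add_apply, Pi.smul_apply, innerₗ_apply_apply, smul_eq_mul,
      Function.const_apply]
    field_simp
    ring
  · dsimp only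
    split_ifs with h
    · rw [h, real_inner_self_eq_norm_sq, hnorm]
      field_simp
      ring
    · rw [real_inner_comm, hinner i j h]
      simp

theorem sum_abs_le_of_regular {n : ℕ} (hn1 : 1 ≤ n) (hn4 : n ≤ 4)
    {s : Fin (n + 1) → EuclideanSpace ℝ (Fin n)} (hsind : AffineIndependent ℝ s) {d : ℝ}
    (hd : ∀ i j, i ≠ j → dist (s i) (s j) = d) (hnorm : ∀ j, ‖s j‖ = 1)
    {lam : Fin (n + 1) → EuclideanSpace ℝ (Fin n) → ℝ} (hlam : IsLagrangeBasis s lam)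
    {z : EuclideanSpace ℝ (Fin n)} (hz : ‖z‖ ≤ 1) :
    ∑ j, |lam j z| ≤ (3 * n - 1) / (n + 1) := by
  have hspan := hsind.affineSpan_eq_top_of_finrank_eq finrank_euclideanSpace_fin
  let b : AffineBasis (Fin (n + 1)) ℝ (EuclideanSpace ℝ (Fin n)) := ⟨s, hsind, hspan⟩
  have hsum := sum_eq_zero_of_dist_eq hspan hd hnorm
  have hinner : ∀ i j, i ≠ j → n * ⟪s i, s j⟫ = -1 := fun i j =>
    mul_inner_eq_neg_one_of_dist_eq hspan hd hnorm
  have hlam_eq : lam = fun j z => (1 + n * ⟪s j, z⟫) / (n + 1) :=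
    IsLagrangeBasis.unique (b := b) hlam (isLagrangeBasis_of_mul_inner_eq_neg_one hnorm hinner)
  have ht0 : ∑ j, ⟪s j, z⟫ = 0 := by rw [← sum_inner, hsum, inner_zero_left]
  have ht2 : n * ∑ j, ⟪s j, z⟫ ^ 2 ≤ n + 1 := by
    rw [mul_sum_inner_sq_eq hspan hsum hnorm hinner]
    exact mul_le_of_le_one_right (by positivity) (pow_le_one₀ (norm_nonneg z) hz)
  calc ∑ j, |lam j z| = (∑ j, |1 + n * ⟪s j, z⟫|) / (n + 1) := by
        simp only [hlam_eq, abs_div, abs_of_pos (Nat.cast_add_one_pos (α := ℝ) n), sum_div]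
    _ ≤ (3 * n - 1) / (n + 1) := by
        gcongr
        exact sum_abs_one_add_mul_le hn1 hn4 ht0 ht2

theorem regular_simplex_minimizes_norm_low_dim
    {n : ℕ} (hn1 : 1 ≤ n) (hn4 : n ≤ 4)
    (x : Fin (n + 1) → EuclideanSpace ℝ (Fin n))
    (hind : AffineIndependent ℝ x)
    (hxB : ∀ j, x j ∈ Metric.closedBall (0 : EuclideanSpace ℝ (Fin n)) 1)
    (lam : Fin (n + 1) → EuclideanSpace ℝ (Fin n) → ℝ)
    (hlam : IsLagrangeBasis x lam)
    (s : Fin (n + 1) → EuclideanSpace ℝ (Fin n))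
    (hsind : AffineIndependent ℝ s)
    (hsreg : ∃ d : ℝ, ∀ i j, i ≠ j → dist (s i) (s j) = d)
    (hsins : ∀ j, ‖s j‖ = 1)
    (lam' : Fin (n + 1) → EuclideanSpace ℝ (Fin n) → ℝ)
    (hlam' : IsLagrangeBasis s lam') :
    sSup ((fun z => ∑ j, |lam j z|) ''
        Metric.closedBall (0 : EuclideanSpace ℝ (Fin n)) 1) ≥
      sSup ((fun z => ∑ j, |lam' j z|) ''
        Metric.closedBall (0 : EuclideanSpace ℝ (Fin n)) 1) := by
  obtain ⟨d, hd⟩ := hsreg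
  let b : AffineBasis (Fin (n + 1)) ℝ (EuclideanSpace ℝ (Fin n)) :=
    ⟨x, hind, hind.affineSpan_eq_top_of_finrank_eq finrank_euclideanSpace_fin⟩
  have hlam_b : IsLagrangeBasis b lam := hlam
  obtain ⟨z, hz, hlow⟩ := hlam_b.exists_le_sum_abs fun j => mem_closedBall_zero_iff.mp (hxB j)
  have hbdd : BddAbove ((fun z => ∑ j, |lam j z|) '' Metric.closedBall 0 1) :=
    ((isCompact_closedBall _ _).image
      (continuous_finsetSum _ fun j _ => (hlam_b.continuous j).abs)).bddAbove
  calc sSup ((fun z => ∑ j, |lam' j z|) '' Metric.closedBall 0 1)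
      ≤ (3 * n - 1) / (n + 1) :=
        csSup_le ((Metric.nonempty_closedBall.mpr zero_le_one).image _) <|
          Set.forall_mem_image.mpr fun w hw =>
            sum_abs_le_of_regular hn1 hn4 hsind hd hsins hlam' (mem_closedBall_zero_iff.mp hw)
    _ ≤ ∑ j, |lam j z| := hlow
    _ ≤ sSup ((fun z => ∑ j, |lam j z|) '' Metric.closedBall 0 1) := le_csSup hbdd ⟨z, hz, rfl⟩
end
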